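/- arXiv:1808.01898 — 12 statements merged into one kernel-verified Lean document; each statement's English description precedes it below -/
import Mathlib

section
/- If a sequence (c_n) of positive reals satisfies c_{n+1}/c_n → 1 and there exist n₀ and a > 1/2 with c_{2n}/c_n ≥ a for all n ≥ n₀, then the series ∑ c_n diverges. -/
/-!
Since `c (2n + 1) / c (2n) → 1`, eventually `a (1 + c (2n + 1) / c (2n)) ≥ 1`; together with
`c (2n) ≥ a c n` this says that each term is
dominated by the sum of its two "children": `c n ≤ c (2n) + c (2n + 1)`. Summing this over
`n ≥ N` bounds the tail `∑_{n ≥ N} c n` by the strictly smaller tail `∑_{n ≥ 2N} c n`, which is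
absurd for a convergent series of positive terms.
-/

open Filter Topology

lemma not_summable_of_le_add_children {d : ℕ → ℝ}
    (hle : ∀ n, d n ≤ d (2 * n) + d (2 * n + 1)) (hlt : ∃ n, d n < d (2 * n) + d (2 * n + 1)) :
    ¬ Summable d := by
  intro hsum
  obtain ⟨n, hn⟩ := hlt
  have heven : Summable fun k => d (2 * k) :=
    hsum.comp_injective fun _ _ h => by simpa using h
  have hodd : Summable fun k => d (2 * k + 1) :=
    hsum.comp_injective fun _ _ h => by simpa using h
  have := calc ∑' k, d k
      < ∑' k, (d (2 * k) + d (2 * k + 1)) := hsum.tsum_lt_tsum hle hn (heven.add hodd)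
    _ = ∑' k, d k := by rw [heven.tsum_add hodd, tsum_even_add_odd heven hodd]
  exact this.false

lemma not_summable_of_eventually_le_add_children {c : ℕ → ℝ} (hpos : ∀ n, 0 < c n)
    (hle : ∀ᶠ n in atTop, c n ≤ c (2 * n) + c (2 * n + 1)) : ¬ Summable c := by
  obtain ⟨N, hN⟩ := eventually_atTop.mp hle
  -- Cutting `c` off below `N + 1` makes the inequality global and strict at `n = N`.
  set d := (Set.Ici (N + 1)).indicator c
  have hd : ∀ n, 0 ≤ d n := Set.indicator_nonneg fun n _ => (hpos n).le
  refine fun hsum =>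
    not_summable_of_le_add_children (d := d) (fun n => ?_) ⟨N, ?_⟩ (hsum.indicator _)
  · by_cases hn : N + 1 ≤ n
    · simp only [d, Set.indicator_apply, Set.mem_Ici, if_pos hn,
        if_pos (by omega : N + 1 ≤ 2 * n), if_pos (by omega : N + 1 ≤ 2 * n + 1)]
      exact hN n (by omega)
    · rw [show d n = 0 from Set.indicator_of_notMem (by simpa using hn) c]
      exact add_nonneg (hd _) (hd _)
  · rw [show d N = 0 from Set.indicator_of_notMem (by simp) c,
      show d (2 * N + 1) = c (2 * N + 1) from Set.indicator_of_mem (by simp; omega) c]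
    exact add_pos_of_nonneg_of_pos (hd _) (hpos _)

lemma eventually_le_add_children {c : ℕ → ℝ} (hpos : ∀ n, 0 < c n)
    (hratio : Tendsto (fun n => c (n + 1) / c n) atTop (𝓝 1)) {a : ℝ} (ha : 1 / 2 < a)
    (hdouble : ∀ᶠ n in atTop, a ≤ c (2 * n) / c n) :
    ∀ᶠ n in atTop, c n ≤ c (2 * n) + c (2 * n + 1) := by
  have hfactor : Tendsto (fun n => a * (1 + c (2 * n + 1) / c (2 * n))) atTop (𝓝 (a * (1 + 1))) :=
    ((hratio.comp (tendsto_id.const_mul_atTop' two_pos)).const_add 1).const_mul a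
  filter_upwards [hfactor.eventually_const_le (by linarith : (1 : ℝ) < a * (1 + 1)), hdouble]
    with n hn hdn
  rw [le_div_iff₀ (hpos n)] at hdn
  calc c n ≤ a * (1 + c (2 * n + 1) / c (2 * n)) * c n := le_mul_of_one_le_left (hpos n).le hn
    _ = (1 + c (2 * n + 1) / c (2 * n)) * (a * c n) := by ring
    _ ≤ (1 + c (2 * n + 1) / c (2 * n)) * c (2 * n) := by
      gcongr
      exact add_nonneg zero_le_one (div_nonneg (hpos _).le (hpos _).le)
    _ = c (2 * n) + c (2 * n + 1) := by rw [add_mul, one_mul, div_mul_cancel₀ _ (hpos _).ne']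

theorem stmt_1 (c : ℕ → ℝ) (hpos : ∀ n, 0 < c n)
    (hratio : Tendsto (fun n => c (n + 1) / c n) atTop (𝓝 1))
    (ha : ∃ (n₀ : ℕ) (a : ℝ), 1 / 2 < a ∧ ∀ n ≥ n₀, a ≤ c (2 * n) / c n) :
    ¬ Summable c := by
  obtain ⟨n₀, a, ha, hdouble⟩ := ha
  exact not_summable_of_eventually_le_add_children hpos <|
    eventually_le_add_children hpos hratio ha (eventually_atTop.mpr ⟨n₀, hdouble⟩)
end

section
/- If (b_n) is a sequence of positive reals with lim_{n→∞} n·log(b_{n+1}/b_n) = α, then b_n admits the Karamata representation b_n = C(n) · n^α · exp(∑_{k=1}^n δ_k/k), where C(n) converges to a positive constant and δ_n → 0. -/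
open Filter Topology

/-! With `δ k := k log (b (k+1) / b k) - α`, the sum `∑_{k ≤ n} δ k / k` telescopes to
`log b (n+1) - log b 1 - α H_n`, where `H_n` is the harmonic number. Hence the representation holds
exactly with `C n = b 1 · exp (α (H_n - log n)) · b n / b (n+1)`, and `C n → b 1 · exp (α γ)`
because `H_n - log n → γ` and `b n / b (n+1) → 1`, the latter since
`log (b (n+1) / b n) = (n log (b (n+1) / b n)) / n → 0`. -/

namespace Real

lemma sum_Icc_natCast_mul_log_div_sub_div {b : ℕ → ℝ} (hpos : ∀ n, 0 < b n) (α : ℝ) (n : ℕ) :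
    ∑ k ∈ Finset.Icc 1 n, ((k : ℝ) * log (b (k + 1) / b k) - α) / k
      = log (b (n + 1)) - log (b 1) - α * harmonic n := by
  induction n with
  | zero => simp
  | succ m ih =>
    rw [Finset.sum_Icc_succ_top (by omega), ih, harmonic_succ, log_div (hpos _).ne' (hpos _).ne']
    push_cast
    field_simp
    ring

lemma karamata_identity {b : ℕ → ℝ} (hpos : ∀ n, 0 < b n) (α : ℝ) {n : ℕ} (hn : 1 ≤ n) :
    b n = b 1 * exp (α * (harmonic n - log n)) * (b n / b (n + 1)) * (n : ℝ) ^ α *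
      exp (∑ k ∈ Finset.Icc 1 n, ((k : ℝ) * log (b (k + 1) / b k) - α) / k) := by
  have hn₀ : (0 : ℝ) < n := by exact_mod_cast hn
  have hb₁ := hpos 1
  have hb := hpos (n + 1)
  rw [sum_Icc_natCast_mul_log_div_sub_div hpos, rpow_def_of_pos hn₀]
  calc b n = b 1 * (b n / b (n + 1)) * exp (log (b (n + 1)) - log (b 1)) := by
        rw [exp_sub, exp_log hb, exp_log hb₁]
        field_simp
    _ = b 1 * (b n / b (n + 1)) * (exp (α * (harmonic n - log n)) * exp (log n * α) *
          exp (log (b (n + 1)) - log (b 1) - α * harmonic n)) := by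
        rw [← exp_add, ← exp_add]
        ring_nf
    _ = _ := by ring

end Real

lemma tendsto_zero_of_tendsto_natCast_mul {x : ℕ → ℝ} {α : ℝ}
    (h : Tendsto (fun n : ℕ => (n : ℝ) * x n) atTop (𝓝 α)) : Tendsto x atTop (𝓝 0) := by
  have h' := tendsto_one_div_atTop_nhds_zero_nat.mul h
  rw [zero_mul] at h'
  refine h'.congr' ?_
  filter_upwards [eventually_ge_atTop 1] with n hn
  have : (n : ℝ) ≠ 0 := Nat.cast_ne_zero.mpr (by omega)
  field_simp

lemma tendsto_div_succ_of_tendsto_log_div {b : ℕ → ℝ} (hpos : ∀ n, 0 < b n)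
    (h : Tendsto (fun n : ℕ => Real.log (b (n + 1) / b n)) atTop (𝓝 0)) :
    Tendsto (fun n : ℕ => b n / b (n + 1)) atTop (𝓝 1) := by
  have hsucc : Tendsto (fun n : ℕ => b (n + 1) / b n) atTop (𝓝 1) := by
    have := (Real.continuous_exp.tendsto 0).comp h
    rw [Real.exp_zero] at this
    refine this.congr fun n => ?_
    exact Real.exp_log (div_pos (hpos _) (hpos _))
  simpa using hsucc.inv₀ one_ne_zero

theorem stmt_3 (b : ℕ → ℝ) (hpos : ∀ n, 0 < b n) (α : ℝ)
    (h : Tendsto (fun n : ℕ => (n : ℝ) * Real.log (b (n + 1) / b n)) atTop (𝓝 α)) :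
    ∃ (C : ℕ → ℝ) (δ : ℕ → ℝ) (c : ℝ), 0 < c ∧ Tendsto C atTop (𝓝 c) ∧
      Tendsto δ atTop (𝓝 0) ∧
      ∀ᶠ n in atTop, b n = C n * (n : ℝ) ^ α * Real.exp (∑ k ∈ Finset.Icc 1 n, δ k / k) := by
  have hratio := tendsto_div_succ_of_tendsto_log_div hpos (tendsto_zero_of_tendsto_natCast_mul h)
  refine ⟨fun n => b 1 * Real.exp (α * (harmonic n - Real.log n)) * (b n / b (n + 1)),
    fun k => k * Real.log (b (k + 1) / b k) - α,
    b 1 * Real.exp (α * Real.eulerMascheroniConstant), by have := hpos 1; positivity, ?_, ?_, ?_⟩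
  · simpa using (tendsto_const_nhds.mul ((Real.continuous_exp.tendsto _).comp
      (Real.tendsto_harmonic_sub_log.const_mul α))).mul hratio
  · simpa using h.sub_const α
  · filter_upwards [eventually_ge_atTop 1] with n hn
    exact Real.karamata_identity hpos α hn
end

section
/- (Raabe's test, convergent case) If (a_n) is a sequence of nonzero reals with lim_{n→∞} n(|a_{n+1}/a_n| − 1) = α and α < −1, then ∑ |a_n| converges, and moreover ∑_{k=n}^∞ |a_k| ∼ n|a_n|/(−1−α) as n → ∞. -/
/-!
Put `b n = |a n|` and `u n = n * b n`. Raabe's hypothesis says exactly that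
`(u n - u (n + 1)) / b n → -1 - α > 0`, so the increments of `u` are eventually comparable to
`b`. In particular `u` eventually decreases, and telescoping bounds the partial sums of `b` by a
value of `u`, which gives summability. The limit of `u` is `0`, as otherwise `b n ≥ L / n` would
not be summable. Telescoping the tail from `n` now gives a Stolz–Cesàro statement for tails:
`u n / ∑_{k ≥ n} b k → -1 - α`.
-/

open Filter Topology Finset

section Telescoping

variable {f u : ℕ → ℝ} {n : ℕ}

theorem sum_range_le_sub_of_le_sub_succ (h : ∀ k ≥ n, f k ≤ u k - u (k + 1)) (m : ℕ) :
    ∑ i ∈ range m, f (n + i) ≤ u n - u (n + m) := by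
  have htele := Finset.sum_range_sub' (fun i => u (n + i)) m
  simp only [add_zero, ← add_assoc] at htele
  rw [← htele]
  exact sum_le_sum fun i _ => h (n + i) (Nat.le_add_right n i)

theorem summable_of_le_sub_succ (hf : ∀ k, 0 ≤ f k) (hu : ∀ k, 0 ≤ u k)
    (h : ∀ k ≥ n, f k ≤ u k - u (k + 1)) : Summable f := by
  refine (summable_nat_add_iff n).1 <| summable_of_sum_range_le (c := u n) (fun _ => hf _) ?_
  intro m
  simpa only [add_comm _ n] using
    (sum_range_le_sub_of_le_sub_succ h m).trans (sub_le_self _ (hu (n + m)))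

theorem tsum_le_of_le_sub_succ (hf : Summable f) (hu : Tendsto u atTop (𝓝 0))
    (h : ∀ k ≥ n, f k ≤ u k - u (k + 1)) : ∑' i, f (n + i) ≤ u n := by
  have hpartial := (hf.comp_injective (add_right_injective n)).hasSum.tendsto_sum_nat
  have htele : Tendsto (fun m => u n - u (n + m)) atTop (𝓝 (u n)) := by
    simpa using tendsto_const_nhds.sub (hu.comp (tendsto_add_atTop_nat n) |>.congr
      fun m => by simp [add_comm])
  exact le_of_tendsto_of_tendsto' hpartial htele (sum_range_le_sub_of_le_sub_succ h)

theorem le_tsum_of_sub_succ_le (hf : Summable f) (hu : Tendsto u atTop (𝓝 0))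
    (h : ∀ k ≥ n, u k - u (k + 1) ≤ f k) : u n ≤ ∑' i, f (n + i) := by
  have := tsum_le_of_le_sub_succ (u := fun k => -u k) hf.neg (by simpa using hu.neg)
    fun k hk => by linarith [h k hk]
  rw [tsum_neg] at this
  linarith

end Telescoping

section StolzTails

variable {b u : ℕ → ℝ} {c : ℝ}

theorem summable_of_tendsto_sub_succ_div (hb : ∀ n, 0 < b n) (hu : ∀ n, 0 ≤ u n) (hc : 0 < c)
    (h : Tendsto (fun n => (u n - u (n + 1)) / b n) atTop (𝓝 c)) : Summable b := by
  obtain ⟨N, hN⟩ := eventually_atTop.1 (h.eventually (lt_mem_nhds (half_lt_self hc)))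
  refine (summable_mul_left_iff (half_pos hc).ne').1 <|
    summable_of_le_sub_succ (n := N) (fun k => by positivity [hb k]) hu fun k hk => ?_
  exact (lt_div_iff₀ (hb k)).1 (hN k hk) |>.le

theorem not_eventually_le_natCast_mul_of_summable (hb : Summable b) {L : ℝ} (hL : 0 < L) :
    ¬ ∀ᶠ n : ℕ in atTop, L ≤ n * b n := by
  intro hLb
  refine Real.not_summable_natCast_inv <| Summable.of_norm_bounded_eventually_nat
    (hb.mul_left L⁻¹) ?_
  filter_upwards [hLb, eventually_ge_atTop 1] with n hn hn1
  have hnpos : (0 : ℝ) < n := by exact_mod_cast hn1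
  rw [Real.norm_of_nonneg (by positivity), inv_le_iff_one_le_mul₀ hnpos]
  calc 1 = L⁻¹ * L := (inv_mul_cancel₀ hL.ne').symm
    _ ≤ L⁻¹ * (n * b n) := by gcongr
    _ = L⁻¹ * b n * n := by ring

theorem tendsto_natCast_mul_zero_of_summable (hb : ∀ n, 0 ≤ b n) (hbs : Summable b)
    (hanti : ∀ᶠ n : ℕ in atTop, ((n + 1 : ℕ) : ℝ) * b (n + 1) ≤ n * b n) :
    Tendsto (fun n : ℕ => n * b n) atTop (𝓝 0) := by
  obtain ⟨N, hN⟩ := eventually_atTop.1 hanti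
  set v : ℕ → ℝ := fun k => ((k + N : ℕ) : ℝ) * b (k + N)
  have hv_anti : Antitone v := antitone_nat_of_succ_le fun k => by
    simpa only [v, Nat.add_right_comm k 1 N] using hN (k + N) (Nat.le_add_left N k)
  have hv_nonneg : ∀ k, 0 ≤ v k := fun k => mul_nonneg (Nat.cast_nonneg _) (hb _)
  have hv := tendsto_atTop_ciInf hv_anti ⟨0, by rintro _ ⟨k, rfl⟩; exact hv_nonneg k⟩
  set L := ⨅ k, v k
  have hu := (tendsto_add_atTop_iff_nat (f := fun n : ℕ => (n : ℝ) * b n) N).1 hv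
  obtain hL | hL := (le_ciInf hv_nonneg : 0 ≤ L).eq_or_lt
  · exact hL ▸ hu
  refine absurd ?_ (not_eventually_le_natCast_mul_of_summable hbs (half_pos hL))
  filter_upwards [hu.eventually (lt_mem_nhds (half_lt_self hL))] with n hn using hn.le

theorem tendsto_div_tsum_of_tendsto_sub_succ_div (hb : ∀ n, 0 < b n) (hbs : Summable b)
    (hu : Tendsto u atTop (𝓝 0)) (h : Tendsto (fun n => (u n - u (n + 1)) / b n) atTop (𝓝 c)) :
    Tendsto (fun n => u n / ∑' k, b (n + k)) atTop (𝓝 c) := by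
  have hT : ∀ n, 0 < ∑' k, b (n + k) := fun n =>
    (hbs.comp_injective (add_right_injective n)).tsum_pos (fun _ => (hb _).le) 0 (hb _)
  refine tendsto_order.2 ⟨fun l hl => ?_, fun l hl => ?_⟩
  · obtain ⟨l', hll', hl'c⟩ := exists_between hl
    obtain ⟨N, hN⟩ := eventually_atTop.1 (h.eventually (lt_mem_nhds hl'c))
    filter_upwards [eventually_ge_atTop N] with n hn
    rw [lt_div_iff₀ (hT n)]
    calc l * ∑' k, b (n + k) < l' * ∑' k, b (n + k) := by gcongr; exact hT n
      _ = ∑' k, l' * b (n + k) := tsum_mul_left.symm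
      _ ≤ u n := tsum_le_of_le_sub_succ (hbs.mul_left l') hu fun k hk =>
          ((lt_div_iff₀ (hb k)).1 (hN k (hn.trans hk))).le
  · obtain ⟨l', hcl', hl'l⟩ := exists_between hl
    obtain ⟨N, hN⟩ := eventually_atTop.1 (h.eventually (gt_mem_nhds hcl'))
    filter_upwards [eventually_ge_atTop N] with n hn
    rw [div_lt_iff₀ (hT n)]
    calc u n ≤ ∑' k, l' * b (n + k) :=
          le_tsum_of_sub_succ_le (hbs.mul_left l') hu fun k hk =>
            ((div_lt_iff₀ (hb k)).1 (hN k (hn.trans hk))).le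
      _ = l' * ∑' k, b (n + k) := tsum_mul_left
      _ < l * ∑' k, b (n + k) := by gcongr; exact hT n

end StolzTails

theorem tendsto_one_of_tendsto_natCast_mul_sub_one {r : ℕ → ℝ} {α : ℝ}
    (h : Tendsto (fun n : ℕ => (n : ℝ) * (r n - 1)) atTop (𝓝 α)) :
    Tendsto r atTop (𝓝 1) := by
  have hsub : Tendsto (fun n : ℕ => r n - 1) atTop (𝓝 0) := by
    simpa using (h.mul tendsto_inv_atTop_nhds_zero_nat).congr' <| by
      filter_upwards [eventually_ge_atTop 1] with n hn
      field_simp [Nat.cast_ne_zero.2 (Nat.one_le_iff_ne_zero.1 hn)]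
  simpa using hsub.add_const 1

theorem tendsto_sub_succ_div_of_raabe {b : ℕ → ℝ} (hb : ∀ n, b n ≠ 0) {α : ℝ}
    (h : Tendsto (fun n : ℕ => (n : ℝ) * (b (n + 1) / b n - 1)) atTop (𝓝 α)) :
    Tendsto (fun n : ℕ => ((n : ℝ) * b n - ((n + 1 : ℕ) : ℝ) * b (n + 1)) / b n) atTop
      (𝓝 (-1 - α)) := by
  have hlim := h.neg.sub (tendsto_one_of_tendsto_natCast_mul_sub_one h)
  rw [neg_sub_comm] at hlim
  refine hlim.congr fun n => ?_
  field_simp [hb n]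
  push_cast
  ring

theorem stmt_5 (a : ℕ → ℝ) (hne : ∀ n, a n ≠ 0) (α : ℝ) (hα : α < -1)
    (h : Tendsto (fun n : ℕ => (n : ℝ) * (|a (n + 1) / a n| - 1)) atTop (𝓝 α)) :
    Summable (fun n => |a n|) ∧
      Tendsto (fun n : ℕ => (∑' k : ℕ, |a (n + k)|) / ((n : ℝ) * |a n| / (-1 - α)))
        atTop (𝓝 1) := by
  have hb : ∀ n, 0 < |a n| := fun n => abs_pos.2 (hne n)
  have hc : 0 < -1 - α := by linarith
  have hquot := tendsto_sub_succ_div_of_raabe (fun n => (hb n).ne') (by simpa only [abs_div] using h)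
  have hsum := summable_of_tendsto_sub_succ_div hb (fun n => by positivity) hc hquot
  have hu : Tendsto (fun n : ℕ => (n : ℝ) * |a n|) atTop (𝓝 0) :=
    tendsto_natCast_mul_zero_of_summable (fun n => (hb n).le) hsum <| by
      filter_upwards [hquot.eventually (lt_mem_nhds hc)] with n hn
      exact sub_nonneg.1 (div_pos_iff_of_pos_right (hb n) |>.1 hn).le
  refine ⟨hsum, ?_⟩
  have hratio := tendsto_div_tsum_of_tendsto_sub_succ_div hb hsum hu hquot
  refine (div_self hc.ne' ▸ tendsto_const_nhds.div hratio hc.ne').congr fun n => ?_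
  simp only [Pi.div_apply]
  rw [div_div_eq_mul_div, div_div_eq_mul_div, mul_comm]
end

section
/- If (a_n) is a sequence of nonzero reals with n(|a_{n+1}/a_n| − 1) → α and α < 0, then a_n → 0; if α > 0, then |a_n| → ∞. -/
open Filter Topology

/-!
Put `b n = log |a n|`. Since `1 - r⁻¹ ≤ log r ≤ r - 1` and `|a (n + 1) / a n| → 1`, the
hypothesis gives `n (b (n + 1) - b n) → α`. For `α > 0` the increments of `b` eventually
exceed `(α / 2) / (n + 1)`, so `b` grows at least like a multiple of the harmonic series and
`|a n| = exp (b n) → ∞`; for `α < 0` the same argument applies to `-b`.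
-/

theorem tendsto_atTop_of_le_natCast_mul_sub {b : ℕ → ℝ} {c : ℝ} (hc : 0 < c)
    (h : ∀ᶠ n : ℕ in atTop, c ≤ n * (b (n + 1) - b n)) : Tendsto b atTop atTop := by
  set H : ℕ → ℝ := fun n => ∑ i ∈ Finset.range n, 1 / ((i : ℝ) + 1)
  have hincr {n : ℕ} (hn : c ≤ n * (b (n + 1) - b n)) : c * (1 / (n + 1)) ≤ b (n + 1) - b n := by
    have hd : 0 < b (n + 1) - b n := pos_of_mul_pos_right (hc.trans_le hn) n.cast_nonneg
    rw [mul_one_div, div_le_iff₀ (by positivity)]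
    linarith
  obtain ⟨N, hN⟩ := eventually_atTop.1 h
  have hmono : ∀ n, N ≤ n → b N - c * H N ≤ b n - c * H n := by
    intro n hn
    induction n, hn using Nat.le_induction with
    | base => exact le_rfl
    | succ n hn ih =>
      have := hincr (hN n hn)
      simp only [H, Finset.sum_range_succ, mul_add] at ih ⊢
      linarith
  exact (tendsto_atTop_add_left_of_le' atTop _ (eventually_atTop.2 ⟨N, hmono⟩)
    (Real.tendsto_sum_range_one_div_nat_succ_atTop.const_mul_atTop hc)).congr
    fun n => sub_add_cancel _ _

theorem tendsto_atTop_of_tendsto_natCast_mul_sub {b : ℕ → ℝ} {α : ℝ} (hα : 0 < α)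
    (h : Tendsto (fun n : ℕ => n * (b (n + 1) - b n)) atTop (𝓝 α)) : Tendsto b atTop atTop :=
  tendsto_atTop_of_le_natCast_mul_sub (half_pos hα) ((h.eventually_const_lt (half_lt_self hα)).mono
    fun _ => le_of_lt)

theorem tendsto_atBot_of_tendsto_natCast_mul_sub {b : ℕ → ℝ} {α : ℝ} (hα : α < 0)
    (h : Tendsto (fun n : ℕ => n * (b (n + 1) - b n)) atTop (𝓝 α)) : Tendsto b atTop atBot := by
  rw [← tendsto_neg_atTop_iff]
  refine tendsto_atTop_of_tendsto_natCast_mul_sub (neg_pos.2 hα) ?_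
  exact h.neg.congr fun n => by ring

theorem tendsto_natCast_mul_log_of_tendsto_natCast_mul_sub_one {r : ℕ → ℝ} {α : ℝ}
    (hr : ∀ n, 0 < r n) (h : Tendsto (fun n : ℕ => n * (r n - 1)) atTop (𝓝 α)) :
    Tendsto (fun n : ℕ => n * Real.log (r n)) atTop (𝓝 α) := by
  have hr1 : Tendsto r atTop (𝓝 1) := by
    have := (h.div_atTop tendsto_natCast_atTop_atTop).add_const 1
    rw [zero_add] at this
    refine this.congr' ((eventually_ne_atTop 0).mono fun n hn => ?_)
    field_simp [Nat.cast_ne_zero.2 hn]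
    ring
  have hlower : Tendsto (fun n : ℕ => n * (1 - (r n)⁻¹)) atTop (𝓝 α) := by
    have := h.mul (hr1.inv₀ one_ne_zero)
    rw [inv_one, mul_one] at this
    refine this.congr fun n => ?_
    field_simp [(hr n).ne']
  refine tendsto_of_tendsto_of_tendsto_of_le_of_le hlower h (fun n => ?_) (fun n => ?_)
  · exact mul_le_mul_of_nonneg_left (Real.one_sub_inv_le_log_of_pos (hr n)) n.cast_nonneg
  · exact mul_le_mul_of_nonneg_left (Real.log_le_sub_one_of_pos (hr n)) n.cast_nonneg

theorem stmt_7 (a : ℕ → ℝ) (hne : ∀ n, a n ≠ 0) (α : ℝ)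
    (h : Tendsto (fun n : ℕ => (n : ℝ) * (|a (n + 1) / a n| - 1)) atTop (𝓝 α)) :
    (α < 0 → Tendsto a atTop (𝓝 0)) ∧
    (0 < α → Tendsto (fun n => |a n|) atTop atTop) := by
  have habs n : |a n| = Real.exp (Real.log |a n|) := (Real.exp_log (abs_pos.2 (hne n))).symm
  have hlog : Tendsto (fun n : ℕ => n * (Real.log |a (n + 1)| - Real.log |a n|)) atTop (𝓝 α) := by
    refine (tendsto_natCast_mul_log_of_tendsto_natCast_mul_sub_one
      (fun n => abs_pos.2 (div_ne_zero (hne _) (hne _))) h).congr fun n => ?_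
    rw [abs_div, Real.log_div (abs_ne_zero.2 (hne _)) (abs_ne_zero.2 (hne _))]
  constructor
  · intro hα
    rw [tendsto_zero_iff_abs_tendsto_zero]
    refine Tendsto.congr (fun n => (habs n).symm) ?_
    exact Real.tendsto_exp_atBot.comp (tendsto_atBot_of_tendsto_natCast_mul_sub hα hlog)
  · intro hα
    refine Tendsto.congr (fun n => (habs n).symm) ?_
    exact Real.tendsto_exp_atTop.comp (tendsto_atTop_of_tendsto_natCast_mul_sub hα hlog)
end

section
/- (Borderline case α = −1) If (a_n) is a sequence of nonzero reals with n(|a_{n+1}/a_n| − 1) → −1 and ∑ |a_n| = ∞, then n·|a_n| / ∑_{k=1}^n |a_k| → 0 as n → ∞. -/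
/-!
Put `b n = |a n|`, `S n = ∑_{k ≤ n} b k` and `t n = S n / (n b n)`. The hypothesis says that
`n b n` is slowly varying: its ratio `q n = n b n / ((n + 1) b (n + 1))` satisfies
`n (q n - 1) → 0`. From `S (n + 1) = S n + b (n + 1)` one gets
`t (n + 1) = q n t n + 1 / (n + 1)`.
While `t n` stays below a level `K`, the error `t n (q n - 1) = o(1 / n)` is dominated by the
harmonic increment `1 / (n + 1)`, so divergence of the harmonic series pushes `t` above `K`,
and once there it cannot fall back. Hence `t n → ∞`, i.e. `n b n / S n → 0`.
-/

open Filter Topology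

theorem exists_le_of_harmonic_increments {t : ℕ → ℝ} {K : ℝ} {N : ℕ}
    (hinc : ∀ n ≥ N, t n < K → t n + 1 / (2 * (n + 1)) ≤ t (n + 1)) :
    ∃ n ≥ N, K ≤ t n := by
  by_contra! hlt
  set H : ℕ → ℝ := fun n => ∑ i ∈ Finset.range n, (1 / (i + 1) : ℝ)
  have hgrow : ∀ n ≥ N, t N + (H n - H N) / 2 ≤ t n := by
    intro n hn
    induction n, hn using Nat.le_induction with
    | base => simp
    | succ n hn ih =>
      have hH : H (n + 1) = H n + 1 / (n + 1) := Finset.sum_range_succ _ n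
      have := hinc n hn (hlt n hn)
      rw [hH]
      calc t N + (H n + 1 / (n + 1) - H N) / 2
          = t N + (H n - H N) / 2 + 1 / (2 * (n + 1)) := by
            field_simp
            ring
        _ ≤ t (n + 1) := by linarith
  have hlower : Tendsto (fun n => t N + (H n - H N) / 2) atTop atTop :=
    tendsto_atTop_add_const_left _ _ <|
      (tendsto_atTop_add_const_right _ _
        Real.tendsto_sum_range_one_div_nat_succ_atTop).atTop_div_const two_pos
  obtain ⟨n, hKn, hNn⟩ := ((hlower.eventually_gt_atTop K).and (eventually_ge_atTop N)).exists
  linarith [hgrow n hNn, hlt n hNn]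

theorem tendsto_atTop_of_le_mul_add_inv_succ {t q : ℕ → ℝ}
    (hq : Tendsto (fun n : ℕ => (n : ℝ) * (q n - 1)) atTop (𝓝 0))
    (ht : ∀ᶠ n in atTop, 0 ≤ t n)
    (hrec : ∀ᶠ n : ℕ in atTop, t n * q n + 1 / (n + 1) ≤ t (n + 1)) :
    Tendsto t atTop atTop := by
  refine tendsto_atTop.2 fun K => ?_
  set K' := max K 1
  have hK' : 1 ≤ K' := le_max_right K 1
  set δ := 1 / (4 * K')
  have hδ : 0 < δ := by positivity
  have hKδ : K' * δ = 1 / 4 := by simp only [δ]; field_simp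
  obtain ⟨N, hN⟩ := eventually_atTop.1 <|
    (hq.eventually (Icc_mem_nhds (neg_lt_zero.2 hδ) hδ)).and
      (ht.and (hrec.and (eventually_ge_atTop 1)))
  have hstep : ∀ n ≥ N,
      0 ≤ t n ∧ (1 : ℝ) ≤ n ∧ t n - t n * δ / n + 1 / (n + 1) ≤ t (n + 1) := by
    intro n hn
    obtain ⟨⟨hqn, -⟩, htn, hrecn, hn1⟩ := hN n hn
    have hnpos : (0 : ℝ) < n := by exact_mod_cast hn1
    have hlow : t n - t n * δ / n ≤ t n * q n := by
      have : t n * (-(n * (q n - 1))) / n ≤ t n * δ / n := by gcongr; linarith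
      calc t n - t n * δ / n ≤ t n - t n * (-(n * (q n - 1))) / n := by linarith
        _ = t n * q n := by field_simp; ring
    exact ⟨htn, by exact_mod_cast hn1, by linarith⟩
  obtain ⟨M, hNM, hKM⟩ : ∃ n ≥ N, K' ≤ t n := by
    refine exists_le_of_harmonic_increments fun n hn hlt => ?_
    obtain ⟨htn, hn1, hstepn⟩ := hstep n hn
    have : t n * δ / n ≤ 1 / (2 * (n + 1)) := by
      calc t n * δ / n ≤ K' * δ / n := by gcongr
        _ ≤ 1 / (2 * (n + 1)) := by
          rw [hKδ, div_div, div_le_div_iff₀ (by positivity) (by positivity)]; linarith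
    have hhalf : 1 / (2 * ((n : ℝ) + 1)) + 1 / (2 * (n + 1)) = 1 / (n + 1) := by
      field_simp; ring
    linarith
  filter_upwards [eventually_ge_atTop M] with n hn
  refine (le_max_left K 1).trans ?_
  induction n, hn using Nat.le_induction with
  | base => exact hKM
  | succ n hn ih =>
    obtain ⟨htn, hn1, hstepn⟩ := hstep n (hNM.trans hn)
    -- Up to `2 K'` the harmonic increment beats the error; beyond it `q n ≥ 3 / 4` suffices.
    rcases le_or_gt (t n) (2 * K') with hle | hgt
    · have : t n * δ / n ≤ 1 / (n + 1) := by
        calc t n * δ / n ≤ 2 * K' * δ / n := by gcongr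
          _ ≤ 1 / (n + 1) := by
            rw [mul_assoc, hKδ, div_le_div_iff₀ (by positivity) (by positivity)]; linarith
      linarith
    · have hδ4 : δ ≤ 1 / 4 := by rw [← hKδ]; exact le_mul_of_one_le_left hδ.le hK'
      have : t n * δ / n ≤ t n / 4 := by
        calc t n * δ / n ≤ t n * δ := div_le_self (by positivity) hn1
          _ ≤ t n / 4 := by rw [div_eq_mul_one_div]; gcongr
      have : 0 ≤ 1 / ((n : ℝ) + 1) := by positivity
      linarith

theorem tendsto_sub_one_of_tendsto_mul_sub_one {ρ : ℕ → ℝ} {c : ℝ}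
    (h : Tendsto (fun n : ℕ => (n : ℝ) * (ρ n - 1)) atTop (𝓝 c)) :
    Tendsto (fun n => ρ n - 1) atTop (𝓝 0) := by
  have := h.mul tendsto_inv_atTop_nhds_zero_nat
  rw [mul_zero] at this
  refine this.congr' ?_
  filter_upwards [eventually_ne_atTop 0] with n hn
  field_simp

theorem tendsto_mul_natCast_mul_ratio_sub_one {b : ℕ → ℝ} (hb : ∀ n, b n ≠ 0)
    (h : Tendsto (fun n : ℕ => (n : ℝ) * (b (n + 1) / b n - 1)) atTop (𝓝 (-1))) :
    Tendsto (fun n : ℕ => (n : ℝ) * (n * b n / ((n + 1) * b (n + 1)) - 1)) atTop (𝓝 0) := by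
  set ρ := fun n => b (n + 1) / b n
  have hρ : Tendsto ρ atTop (𝓝 1) := by
    simpa using (tendsto_sub_one_of_tendsto_mul_sub_one h).add_const 1
  -- `n (n b n / ((n + 1) b (n + 1)) - 1) = -(n / (n + 1)) (n (ρ n - 1) + ρ n) / ρ n`
  have hlim := ((tendsto_natCast_div_add_atTop (1 : ℝ)).mul ((h.add hρ).div hρ one_ne_zero)).neg
  rw [neg_add_cancel, zero_div, mul_zero, neg_zero] at hlim
  refine hlim.congr fun n => ?_
  have := hb n
  have := hb (n + 1)
  simp only [Pi.div_apply, ρ]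
  field_simp
  ring

theorem tendsto_mul_div_sum_Icc_of_tendsto_mul_ratio_sub_one {b : ℕ → ℝ}
    (hb : ∀ n, 0 < b n)
    (h : Tendsto (fun n : ℕ => (n : ℝ) * (b (n + 1) / b n - 1)) atTop (𝓝 (-1))) :
    Tendsto (fun n : ℕ => (n : ℝ) * b n / ∑ k ∈ Finset.Icc 1 n, b k) atTop (𝓝 0) := by
  set S := fun n => ∑ k ∈ Finset.Icc 1 n, b k
  have hS : ∀ n, 0 ≤ S n := fun n => Finset.sum_nonneg fun k _ => (hb k).le
  suffices Tendsto (fun n : ℕ => S n / (n * b n)) atTop atTop by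
    exact this.inv_tendsto_atTop.congr fun n => inv_div _ _
  refine tendsto_atTop_of_le_mul_add_inv_succ
    (tendsto_mul_natCast_mul_ratio_sub_one (fun n => (hb n).ne') h)
    (Eventually.of_forall fun n => div_nonneg (hS n) (by have := hb n; positivity)) ?_
  filter_upwards [eventually_ge_atTop 1] with n hn
  have : (n : ℝ) ≠ 0 := Nat.cast_ne_zero.2 (by omega)
  have := (hb n).ne'
  have := (hb (n + 1)).ne'
  rw [show S (n + 1) = S n + b (n + 1) from Finset.sum_Icc_succ_top (by omega) b]
  refine le_of_eq ?_
  push_cast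
  field_simp

theorem stmt_8_general (a : ℕ → ℝ) (hne : ∀ n, a n ≠ 0)
    (h : Tendsto (fun n : ℕ => (n : ℝ) * (|a (n + 1) / a n| - 1)) atTop (𝓝 (-1))) :
    Tendsto (fun n : ℕ => (n : ℝ) * |a n| / ∑ k ∈ Finset.Icc 1 n, |a k|) atTop (𝓝 0) := by
  simp only [abs_div] at h
  exact tendsto_mul_div_sum_Icc_of_tendsto_mul_ratio_sub_one (fun n => abs_pos.2 (hne n)) h

theorem stmt_8 (a : ℕ → ℝ) (hne : ∀ n, a n ≠ 0)
    (h : Tendsto (fun n : ℕ => (n : ℝ) * (|a (n + 1) / a n| - 1)) atTop (𝓝 (-1)))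
    (hdiv : Tendsto (fun n : ℕ => ∑ k ∈ Finset.Icc 1 n, |a k|) atTop atTop) :
    Tendsto (fun n : ℕ => (n : ℝ) * |a n| / ∑ k ∈ Finset.Icc 1 n, |a k|) atTop (𝓝 0) :=
  stmt_8_general a hne h
end

section
/- Let α(n) = n(|a_{n+1}/a_n| − 1) → −1, and suppose the series B(n) = ∑_{k=k₀}^n (α(k)+1)/k converges to a finite limit L as n → ∞. Then n·|a_n| converges to a finite positive limit, and hence ∑ |a_n| = ∞. -/
/-!
With `b n = |a n|` and `r n = b (n + 1) / b n`, the increments of `log (n * b n)` are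
`log (1 + 1/n) + log (r n) = ((r n - 1) + 1/n) + O(1/n²)`, because `r n - 1 = O(1/n)` and
`log (1 + x) = x + O(x²)`. The first part has convergent partial sums by hypothesis and the
error terms are absolutely summable, so `log (n * b n)` converges and `n * b n` tends to a
positive limit `c`. Then `b n ~ c / n`, so `∑ b n` diverges like the harmonic series.
-/

open Filter Topology Asymptotics Finset Real

lemma Real.log_one_add_sub_self_isBigO :
    (fun x : ℝ => log (1 + x) - x) =O[𝓝 0] fun x => x ^ 2 := by
  refine IsBigO.of_bound 2 ?_
  filter_upwards [Ioo_mem_nhds (show (-1 / 2 : ℝ) < 0 by norm_num) one_pos] with x hx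
  have hx₀ : 0 < 1 + x := by linarith [hx.1]
  have hlower : x / (1 + x) ≤ log (1 + x) := by
    convert one_sub_inv_le_log_of_pos hx₀ using 1
    field_simp; ring
  have hsq : x ^ 2 / (1 + x) ≤ 2 * x ^ 2 := by
    rw [div_le_iff₀ hx₀]; nlinarith [sq_nonneg x, hx.1]
  have hsplit : x / (1 + x) - x = -(x ^ 2 / (1 + x)) := by field_simp; ring
  rw [Real.norm_eq_abs, norm_pow, Real.norm_eq_abs, sq_abs, abs_le]
  constructor
  · linarith
  · linarith [log_le_sub_one_of_pos hx₀, sq_nonneg x]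

lemma summable_log_one_add_sub_self {u : ℕ → ℝ} (hu : u =O[atTop] fun n => (n : ℝ)⁻¹) :
    Summable fun n => log (1 + u n) - u n := by
  have hu₀ : Tendsto u atTop (𝓝 0) := hu.trans_tendsto tendsto_inv_atTop_nhds_zero_nat
  refine summable_of_isBigO_nat (Real.summable_nat_pow_inv.mpr one_lt_two) ?_
  simpa only [Function.comp_def, inv_pow] using
    (log_one_add_sub_self_isBigO.comp_tendsto hu₀).trans (hu.pow 2)

lemma isBigO_inv_of_tendsto_natCast_mul {x : ℕ → ℝ} {l : ℝ}
    (h : Tendsto (fun n => n * x n) atTop (𝓝 l)) : x =O[atTop] fun n => (n : ℝ)⁻¹ := by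
  refine ((h.isBigO_one ℝ).mul (isBigO_refl (fun n : ℕ => (n : ℝ)⁻¹) atTop)).congr' ?_ ?_
  · filter_upwards [eventually_ne_atTop 0] with n hn
    field_simp
  · simp

lemma tendsto_sum_range_of_tendsto_sum_Icc {f : ℕ → ℝ} {k₀ : ℕ} {L : ℝ}
    (h : Tendsto (fun n => ∑ k ∈ Icc k₀ n, f k) atTop (𝓝 L)) :
    Tendsto (fun n => ∑ k ∈ range n, f k) atTop (𝓝 (∑ k ∈ range k₀, f k + L)) := by
  rw [← tendsto_add_atTop_iff_nat 1]
  refine (h.const_add _).congr' ?_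
  filter_upwards [eventually_ge_atTop k₀] with n hn
  rw [← sum_range_add_sum_Ico _ (by omega : k₀ ≤ n + 1), Ico_add_one_right_eq_Icc]

lemma exists_tendsto_of_eventually_sub_eq {G : Type*} [AddCommGroup G] [TopologicalSpace G]
    [IsTopologicalAddGroup G] {F d : ℕ → G} {l : G}
    (hd : ∀ᶠ n in atTop, F (n + 1) - F n = d n)
    (hs : Tendsto (fun n => ∑ k ∈ range n, d k) atTop (𝓝 l)) :
    ∃ c, Tendsto F atTop (𝓝 c) := by
  obtain ⟨N, hN⟩ := eventually_atTop.mp hd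
  have hF : ∀ n ≥ N, F n = F N - ∑ k ∈ range N, d k + ∑ k ∈ range n, d k := by
    intro n hn
    induction n, hn using Nat.le_induction with
    | base => abel
    | succ n hn ih => rw [sum_range_succ, ← hN n hn, ih]; abel
  exact ⟨_, (hs.const_add _).congr' (eventually_atTop.mpr ⟨N, fun n hn => (hF n hn).symm⟩)⟩

lemma summable_log_one_add_inv_add_log_sub {r : ℕ → ℝ}
    (hr : (fun n => r n - 1) =O[atTop] fun n => (n : ℝ)⁻¹) :
    Summable fun n : ℕ => log (1 + (n : ℝ)⁻¹) + log (r n) - ((n : ℝ) * (r n - 1) + 1) / n := by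
  refine ((summable_log_one_add_sub_self (isBigO_refl _ _)).add
    (summable_log_one_add_sub_self hr)).congr_cofinite ?_
  rw [Nat.cofinite_eq_atTop]
  filter_upwards [eventually_ne_atTop 0] with n hn
  simp only [add_sub_cancel]
  field_simp
  ring

theorem exists_pos_tendsto_natCast_mul {b : ℕ → ℝ} {L : ℝ} (hb : ∀ n, 0 < b n)
    (hratio : (fun n => b (n + 1) / b n - 1) =O[atTop] fun n => (n : ℝ)⁻¹)
    (hsum : Tendsto (fun n => ∑ k ∈ range n, ((k : ℝ) * (b (k + 1) / b k - 1) + 1) / k)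
      atTop (𝓝 L)) :
    ∃ c, 0 < c ∧ Tendsto (fun n : ℕ => (n : ℝ) * b n) atTop (𝓝 c) := by
  have hstep : ∀ᶠ n : ℕ in atTop, log ((n + 1 : ℕ) * b (n + 1)) - log (n * b n) =
      log (1 + (n : ℝ)⁻¹) + log (b (n + 1) / b n) := by
    filter_upwards [eventually_ne_atTop 0] with n hn
    have hn' : (0 : ℝ) < n := Nat.cast_pos.mpr (Nat.pos_of_ne_zero hn)
    have hprod : ((n + 1 : ℕ) : ℝ) * b (n + 1) / (n * b n) =
        (1 + (n : ℝ)⁻¹) * (b (n + 1) / b n) := by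
      push_cast; field_simp
    rw [← log_mul (by positivity) (div_pos (hb _) (hb n)).ne', ← hprod,
      log_div (mul_pos (by positivity) (hb _)).ne' (mul_pos hn' (hb n)).ne']
  have hlog_sum := hsum.add (summable_log_one_add_inv_add_log_sub hratio).hasSum.tendsto_sum_nat
  simp only [← sum_add_distrib, add_sub_cancel] at hlog_sum
  obtain ⟨c, hc⟩ := exists_tendsto_of_eventually_sub_eq (F := fun n : ℕ => log (n * b n)) hstep
    hlog_sum
  refine ⟨exp c, exp_pos c, ((continuous_exp.tendsto c).comp hc).congr' ?_⟩
  filter_upwards [eventually_ne_atTop 0] with n hn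
  exact exp_log (mul_pos (Nat.cast_pos.mpr (Nat.pos_of_ne_zero hn)) (hb n))

lemma not_summable_of_tendsto_natCast_mul {b : ℕ → ℝ} {c : ℝ} (hc : 0 < c)
    (h : Tendsto (fun n : ℕ => (n : ℝ) * b n) atTop (𝓝 c)) : ¬ Summable b := by
  intro hb
  refine Real.not_summable_natCast_inv (summable_of_isBigO_nat hb ?_)
  refine (((h.inv₀ hc.ne').isBigO_one ℝ).mul (isBigO_refl b atTop)).congr' ?_ (by simp)
  filter_upwards [eventually_ne_atTop 0, h.eventually_ne hc.ne'] with n hn hbn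
  have hb : b n ≠ 0 := right_ne_zero_of_mul hbn
  field_simp

theorem stmt_10 (a : ℕ → ℝ) (hne : ∀ n, a n ≠ 0)
    (h : Tendsto (fun n : ℕ => (n : ℝ) * (|a (n + 1) / a n| - 1)) atTop (𝓝 (-1)))
    (hB : ∃ (k₀ : ℕ) (L : ℝ),
      Tendsto (fun n : ℕ =>
        ∑ k ∈ Finset.Icc k₀ n, ((k : ℝ) * (|a (k + 1) / a k| - 1) + 1) / k)
        atTop (𝓝 L)) :
    (∃ c : ℝ, 0 < c ∧ Tendsto (fun n : ℕ => (n : ℝ) * |a n|) atTop (𝓝 c)) ∧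
      ¬ Summable (fun n => |a n|) := by
  obtain ⟨k₀, L, hB⟩ := hB
  simp only [abs_div] at h hB
  obtain ⟨c, hc, hc_lim⟩ := exists_pos_tendsto_natCast_mul (fun n => abs_pos.mpr (hne n))
    (isBigO_inv_of_tendsto_natCast_mul h) (tendsto_sum_range_of_tendsto_sum_Icc hB)
  exact ⟨⟨c, hc, hc_lim⟩, not_summable_of_tendsto_natCast_mul hc hc_lim⟩
end

section
/- For a_n = ∏_{k=1}^n (2 − e^{1/k}), one has n(a_{n+1}/a_n − 1) → −1, n(n(a_{n+1}/a_n − 1) + 1) → 1/2 (in the sense that α(n)+1 ∼ 1/(2n)), and ∑ a_n diverges. -/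
/-!
With `x = 1 / (n + 1)` the ratio `a (n + 1) / a n` is `2 - exp x`. Writing
`exp x = 1 + x + x ^ 2 q(x)` with `q(x) → 1 / 2` gives `α(n) = -(n x) (1 + x q(x))` and
`n (α(n) + 1) = n x - (n x) ^ 2 q(x)`, while `n x → 1`.
For divergence, `exp x < 1 / (1 - x)` makes `(n - 1) |a n|` nondecreasing for `n ≥ 2`, so
`|a n| ≥ |a 2| / (n - 1)` and `∑ a n` dominates a multiple of the harmonic series.
-/

open Filter Topology Real

lemma abs_exp_sub_taylor_two_le {x : ℝ} (hx : |x| ≤ 1) :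
    |exp x - (1 + x + x ^ 2 / 2)| ≤ |x| ^ 3 := by
  have h := Real.exp_bound hx (n := 3) (by norm_num)
  norm_num [Finset.sum_range_succ, Nat.factorial] at h
  calc |exp x - (1 + x + x ^ 2 / 2)| ≤ |x| ^ 3 * (2 / 9) := by convert h using 3
    _ ≤ |x| ^ 3 := by nlinarith [pow_nonneg (abs_nonneg x) 3]

lemma tendsto_exp_sub_one_sub_div_sq :
    Tendsto (fun x => (exp x - 1 - x) / x ^ 2) (𝓝[≠] 0) (𝓝 (1 / 2)) := by
  have hbound : ∀ᶠ x in 𝓝[≠] (0 : ℝ), |(exp x - 1 - x) / x ^ 2 - 1 / 2| ≤ |x| := by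
    filter_upwards [self_mem_nhdsWithin, nhdsWithin_le_nhds (Metric.closedBall_mem_nhds 0 one_pos)]
      with x (hx0 : x ≠ 0) hx1
    have hsq : 0 < x ^ 2 := by positivity
    rw [Metric.mem_closedBall, dist_zero_right, Real.norm_eq_abs] at hx1
    have htaylor : (exp x - 1 - x) / x ^ 2 - 1 / 2 = (exp x - (1 + x + x ^ 2 / 2)) / x ^ 2 := by
      field_simp; ring
    rw [htaylor, abs_div, abs_of_pos hsq, div_le_iff₀ hsq]
    calc _ ≤ |x| ^ 3 := abs_exp_sub_taylor_two_le hx1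
      _ = |x| * x ^ 2 := by rw [← sq_abs x]; ring
  rw [tendsto_iff_norm_sub_tendsto_zero]
  refine squeeze_zero' (Eventually.of_forall fun _ => norm_nonneg _) hbound ?_
  exact tendsto_nhdsWithin_of_tendsto_nhds (by simpa using (continuous_abs.tendsto (0 : ℝ)))

lemma tendsto_exp_sub_one_sub_div_sq_one_div_succ :
    Tendsto (fun n : ℕ => (exp (1 / (n + 1)) - 1 - 1 / (n + 1)) / (1 / ((n : ℝ) + 1)) ^ 2)
      atTop (𝓝 (1 / 2)) := by
  refine tendsto_exp_sub_one_sub_div_sq.comp (tendsto_nhdsWithin_iff.mpr ⟨?_, ?_⟩)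
  · exact tendsto_one_div_add_atTop_nhds_zero_nat
  · refine Eventually.of_forall fun n => ?_
    simp only [Set.mem_compl_iff, Set.mem_singleton_iff]
    positivity

lemma mul_exp_one_div_succ_lt {k : ℕ} (hk : k ≠ 0) :
    k * exp (1 / (k + 1)) < k + 1 := by
  have hk' : (1 : ℝ) ≤ k := by exact_mod_cast Nat.one_le_iff_ne_zero.mpr hk
  have h := exp_bound_div_one_sub_of_interval' (x := 1 / (k + 1)) (by positivity)
    (by rw [div_lt_one (by positivity)]; linarith)
  have hval : (1 : ℝ) - 1 / (k + 1) = k / (k + 1) := by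
    field_simp
    ring
  rw [hval, one_div_div, lt_div_iff₀ (by linarith)] at h
  linarith

lemma not_summable_of_monotone_mul {f : ℕ → ℝ} (hf : 0 < f 0)
    (hmono : Monotone fun n : ℕ => (n + 1) * f n) : ¬ Summable f := by
  intro hs
  have hharm : Summable fun n : ℕ => f 0 * (1 / ((n : ℝ) + 1)) := by
    refine hs.of_nonneg_of_le (fun n => by positivity) fun n => ?_
    have := hmono (Nat.zero_le n)
    simp only [Nat.cast_zero, zero_add, one_mul] at this
    rw [mul_one_div, div_le_iff₀ (by positivity)]
    linarith
  apply Real.not_summable_one_div_natCast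
  rw [← summable_nat_add_iff 1]
  simpa [hf.ne'] using hharm.mul_left (f 0)⁻¹

-- `α(n)` of the paper, the quantity of Raabe's test.
noncomputable def raabe (a : ℕ → ℝ) (n : ℕ) : ℝ := n * (a (n + 1) / a n - 1)

lemma tendsto_raabe {a : ℕ → ℝ} (ha : ∀ n : ℕ, a (n + 1) / a n = 2 - exp (1 / (n + 1))) :
    Tendsto (raabe a) atTop (𝓝 (-1)) := by
  have hraabe : ∀ n : ℕ, raabe a n = -((n : ℝ) / (n + 1)) *
      (1 + 1 / (n + 1) * ((exp (1 / (n + 1)) - 1 - 1 / (n + 1)) / (1 / ((n : ℝ) + 1)) ^ 2)) := by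
    intro n
    rw [raabe, ha]
    field_simp
    ring
  refine Tendsto.congr (fun n => (hraabe n).symm) ?_
  convert (tendsto_natCast_div_add_atTop (1 : ℝ)).neg.mul
    (tendsto_const_nhds.add (tendsto_one_div_add_atTop_nhds_zero_nat.mul
      tendsto_exp_sub_one_sub_div_sq_one_div_succ)) using 2
  norm_num

lemma tendsto_mul_raabe_add_one {a : ℕ → ℝ}
    (ha : ∀ n : ℕ, a (n + 1) / a n = 2 - exp (1 / (n + 1))) :
    Tendsto (fun n : ℕ => n * (raabe a n + 1)) atTop (𝓝 (1 / 2)) := by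
  have hraabe : ∀ n : ℕ, n * (raabe a n + 1) = (n : ℝ) / (n + 1) - ((n : ℝ) / (n + 1)) ^ 2 *
      ((exp (1 / (n + 1)) - 1 - 1 / (n + 1)) / (1 / ((n : ℝ) + 1)) ^ 2) := by
    intro n
    rw [raabe, ha]
    field_simp
    ring
  refine Tendsto.congr (fun n => (hraabe n).symm) ?_
  have hy := tendsto_natCast_div_add_atTop (1 : ℝ)
  convert hy.sub ((hy.pow 2).mul tendsto_exp_sub_one_sub_div_sq_one_div_succ) using 2
  norm_num

noncomputable def twoSubExpProd (n : ℕ) : ℝ :=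
  ∏ k ∈ Finset.Icc 1 n, (2 - exp (1 / (k : ℝ)))

lemma twoSubExpProd_succ (n : ℕ) :
    twoSubExpProd (n + 1) = twoSubExpProd n * (2 - exp (1 / (n + 1))) := by
  rw [twoSubExpProd, twoSubExpProd, Finset.prod_Icc_succ_top (Nat.le_add_left 1 n)]
  push_cast
  rfl

lemma two_sub_exp_one_div_succ_pos {k : ℕ} (hk : k ≠ 0) : 0 < 2 - exp (1 / (k + 1)) := by
  have hk' : (1 : ℝ) ≤ k := by exact_mod_cast Nat.one_le_iff_ne_zero.mpr hk
  nlinarith [mul_exp_one_div_succ_lt hk, exp_pos (1 / (k + 1))]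

lemma two_sub_exp_one_div_succ_ne_zero (k : ℕ) : 2 - exp (1 / (k + 1)) ≠ 0 := by
  rcases eq_or_ne k 0 with rfl | hk
  · norm_num
    linarith [exp_one_gt_d9]
  · exact (two_sub_exp_one_div_succ_pos hk).ne'

lemma twoSubExpProd_ne_zero (n : ℕ) : twoSubExpProd n ≠ 0 := by
  induction n with
  | zero => simp [twoSubExpProd]
  | succ n ih =>
    rw [twoSubExpProd_succ]
    exact mul_ne_zero ih (two_sub_exp_one_div_succ_ne_zero n)

lemma twoSubExpProd_succ_div (n : ℕ) :
    twoSubExpProd (n + 1) / twoSubExpProd n = 2 - exp (1 / (n + 1)) := by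
  rw [twoSubExpProd_succ, mul_div_cancel_left₀ _ (twoSubExpProd_ne_zero n)]

lemma not_summable_twoSubExpProd : ¬ Summable twoSubExpProd := by
  intro hs
  have h2 : Summable fun n => |twoSubExpProd (n + 2)| :=
    (summable_nat_add_iff (f := fun n => |twoSubExpProd n|) 2).mpr hs.abs
  have hpos : 0 < |twoSubExpProd (0 + 2)| := abs_pos.mpr (twoSubExpProd_ne_zero 2)
  refine not_summable_of_monotone_mul hpos (monotone_nat_of_le_succ fun n => ?_) h2
  have hk : n + 2 ≠ 0 := by omega
  have hfactor : (n : ℝ) + 1 ≤ (n + 2) * (2 - exp (1 / (n + 2 + 1))) := by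
    have := mul_exp_one_div_succ_lt hk
    push_cast at this
    linarith
  rw [twoSubExpProd_succ (n + 2), abs_mul, abs_of_pos (two_sub_exp_one_div_succ_pos hk)]
  push_cast
  calc ((n : ℝ) + 1) * |twoSubExpProd (n + 2)|
      ≤ (n + 2) * (2 - exp (1 / (n + 2 + 1))) * |twoSubExpProd (n + 2)| := by gcongr
    _ = _ := by ring

theorem stmt_12 (a : ℕ → ℝ)
    (ha : ∀ n, a n = ∏ k ∈ Finset.Icc 1 n, (2 - Real.exp (1 / (k : ℝ)))) :
    Tendsto (fun n : ℕ => (n : ℝ) * (a (n + 1) / a n - 1)) atTop (𝓝 (-1)) ∧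
      Tendsto (fun n : ℕ => (n : ℝ) * ((n : ℝ) * (a (n + 1) / a n - 1) + 1))
        atTop (𝓝 (1 / 2)) ∧
      ¬ Summable a := by
  obtain rfl : a = twoSubExpProd := funext ha
  exact ⟨tendsto_raabe twoSubExpProd_succ_div, tendsto_mul_raabe_add_one twoSubExpProd_succ_div,
    not_summable_twoSubExpProd⟩
end

section
/- Suppose (a_n) is a sequence of positive reals such that α(n) := n(a_{n+1}/a_n − 1) satisfies α ≤ α(n) ≤ β for all n ≥ N (with α, β real constants). Then there exist positive constants A, B and N' such that A n^α ≤ a_n ≤ B n^β for all n ≥ N'. -/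
open Filter Topology

/-!
Since `log (1 + y) = y + O(y²)`, the hypothesis pins the increment `log a (n + 1) - log a n`
between `α (log (n + 1) - log n)` and `β (log (n + 1) - log n)` up to errors `O(1 / n²)`.
As `∑ 1 / n²` converges, `log a n - β log n` and `α log n - log a n` are bounded above,
which exponentiates to `A n ^ α ≤ a n ≤ B n ^ β`.
-/

open Real

theorem le_add_tsum_of_sub_le {g e : ℕ → ℝ} (he : Summable e) (he0 : ∀ k, 0 ≤ e k) {M : ℕ}
    (h : ∀ k ≥ M, g (k + 1) - g k ≤ e k) {n : ℕ} (hn : M ≤ n) : g n ≤ g M + ∑' k, e k := by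
  have hpartial : g n ≤ g M + ∑ k ∈ Finset.Ico M n, e k := by
    induction n, hn using Nat.le_induction with
    | base => simp
    | succ n hMn ih =>
      rw [Finset.sum_Ico_succ_top hMn]
      linarith [h n hMn]
  linarith [he.sum_le_tsum (Finset.Ico M n) fun k _ => he0 k]

theorem abs_log_one_add_sub_self_le {y : ℝ} (hy : |y| ≤ 1 / 2) : |log (1 + y) - y| ≤ 2 * y ^ 2 := by
  have h := abs_log_sub_add_sum_range_le (x := -y) (by rw [abs_neg]; linarith) 1
  simp only [Finset.range_one, Finset.sum_singleton, zero_add, pow_one, Nat.cast_zero,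
    div_one, sub_neg_eq_add, abs_neg, add_comm (-y)] at h
  calc |log (1 + y) - y| ≤ |y| ^ 2 / (1 - |y|) := h
    _ ≤ |y| ^ 2 / (1 / 2) := by gcongr; linarith
    _ = 2 * y ^ 2 := by rw [sq_abs]; ring

theorem abs_mul_log_add_one_sub_log_sub_le (γ : ℝ) {t : ℝ} (ht : 2 ≤ t) :
    |γ * (log (t + 1) - log t) - γ / t| ≤ 2 * |γ| / t ^ 2 := by
  have ht0 : 0 < t := by linarith
  have hlog : log (t + 1) - log t = log (1 + t⁻¹) := by
    rw [← log_div (by positivity) ht0.ne', add_div, div_self ht0.ne', one_div]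
  have hinv : |t⁻¹| ≤ 1 / 2 := by
    rw [abs_of_pos (inv_pos.mpr ht0), one_div]
    exact inv_anti₀ (by norm_num) ht
  calc |γ * (log (t + 1) - log t) - γ / t| = |γ| * |log (1 + t⁻¹) - t⁻¹| := by
        rw [hlog, ← abs_mul, mul_sub, div_eq_mul_inv]
    _ ≤ |γ| * (2 * t⁻¹ ^ 2) := by gcongr; exact abs_log_one_add_sub_self_le hinv
    _ = 2 * |γ| / t ^ 2 := by rw [inv_pow]; ring

theorem log_sub_log_sub_mul_log_le {x y t β : ℝ} (hx : 0 < x) (hy : 0 < y) (ht : 2 ≤ t)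
    (h : t * (y / x - 1) ≤ β) :
    (log y - β * log (t + 1)) - (log x - β * log t) ≤ 2 * |β| / t ^ 2 := by
  have ht0 : 0 < t := by linarith
  have hstep : log y - log x ≤ β / t := by
    rw [← log_div hy.ne' hx.ne', le_div_iff₀ ht0]
    nlinarith [log_le_sub_one_of_pos (div_pos hy hx)]
  have := (abs_le.mp (abs_mul_log_add_one_sub_log_sub_le β ht)).1
  linarith

theorem mul_log_sub_log_sub_le {x y t α : ℝ} (hx : 0 < x) (hy : 0 < y) (ht : 2 ≤ t)
    (htα : 2 * |α| ≤ t) (h : α ≤ t * (y / x - 1)) :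
    (α * log (t + 1) - log y) - (α * log t - log x) ≤ (2 * |α| + 2 * α ^ 2) / t ^ 2 := by
  have ht0 : 0 < t := by linarith
  have hαt : |α / t| ≤ 1 / 2 := by
    rw [abs_div, abs_of_pos ht0, div_le_iff₀ ht0]; linarith
  have hratio : 1 + α / t ≤ y / x := by
    have : α / t ≤ y / x - 1 := by rw [div_le_iff₀ ht0]; linarith
    linarith
  have hstep : log (1 + α / t) ≤ log y - log x := by
    rw [← log_div hy.ne' hx.ne']
    exact log_le_log (by linarith [(abs_le.mp hαt).1]) hratio
  have hlog := (abs_le.mp (abs_log_one_add_sub_self_le hαt)).1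
  have hmul := (abs_le.mp (abs_mul_log_add_one_sub_log_sub_le α ht)).2
  have : 2 * (α / t) ^ 2 = 2 * α ^ 2 / t ^ 2 := by ring
  rw [add_div]
  linarith

theorem le_exp_mul_rpow_of_log_sub_le {x t γ C : ℝ} (hx : 0 < x) (ht : 0 < t)
    (h : log x - γ * log t ≤ C) : x ≤ exp C * t ^ γ := by
  rw [rpow_def_of_pos ht, ← exp_add, ← exp_log hx, exp_le_exp]
  linarith

theorem exp_neg_mul_rpow_le_of_mul_log_sub_le {x t γ C : ℝ} (hx : 0 < x) (ht : 0 < t)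
    (h : γ * log t - log x ≤ C) : exp (-C) * t ^ γ ≤ x := by
  rw [rpow_def_of_pos ht, ← exp_add, ← exp_log hx, exp_le_exp]
  linarith

theorem stmt_14 (a : ℕ → ℝ) (hpos : ∀ n, 0 < a n) (α β : ℝ) (N : ℕ)
    (h : ∀ n ≥ N, α ≤ (n : ℝ) * (a (n + 1) / a n - 1) ∧
      (n : ℝ) * (a (n + 1) / a n - 1) ≤ β) :
    ∃ (A B : ℝ) (N' : ℕ), 0 < A ∧ 0 < B ∧
      ∀ n ≥ N', A * (n : ℝ) ^ α ≤ a n ∧ a n ≤ B * (n : ℝ) ^ β := by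
  set M := max N (max 2 ⌈2 * |α|⌉₊)
  have hM (k : ℕ) (hk : M ≤ k) : N ≤ k ∧ (2 : ℝ) ≤ k ∧ 2 * |α| ≤ k := by
    simp only [M, max_le_iff, Nat.ceil_le] at hk
    exact ⟨hk.1, by exact_mod_cast hk.2.1, hk.2.2⟩
  have hsum (c : ℝ) : Summable fun k : ℕ => c / (k : ℝ) ^ 2 := by
    simpa [div_eq_mul_inv] using (summable_nat_pow_inv.mpr one_lt_two).mul_left c
  set gU : ℕ → ℝ := fun n => log (a n) - β * log n
  set gL : ℕ → ℝ := fun n => α * log n - log (a n)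
  have hU (k : ℕ) (hk : k ≥ M) : gU (k + 1) - gU k ≤ 2 * |β| / (k : ℝ) ^ 2 := by
    obtain ⟨hkN, hk2, -⟩ := hM k hk
    simpa [gU] using log_sub_log_sub_mul_log_le (hpos k) (hpos (k + 1)) hk2 (h k hkN).2
  have hL (k : ℕ) (hk : k ≥ M) : gL (k + 1) - gL k ≤ (2 * |α| + 2 * α ^ 2) / (k : ℝ) ^ 2 := by
    obtain ⟨hkN, hk2, hkα⟩ := hM k hk
    simpa [gL] using mul_log_sub_log_sub_le (hpos k) (hpos (k + 1)) hk2 hkα (h k hkN).1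
  refine ⟨exp (-(gL M + ∑' k : ℕ, (2 * |α| + 2 * α ^ 2) / (k : ℝ) ^ 2)),
    exp (gU M + ∑' k : ℕ, 2 * |β| / (k : ℝ) ^ 2), M, exp_pos _, exp_pos _,
    fun n hn => ?_⟩
  have hn0 : (0 : ℝ) < n := by linarith [(hM n hn).2.1]
  exact ⟨exp_neg_mul_rpow_le_of_mul_log_sub_le (hpos n) hn0
      (le_add_tsum_of_sub_le (hsum _) (fun k => by positivity) hL hn),
    le_exp_mul_rpow_of_log_sub_le (hpos n) hn0
      (le_add_tsum_of_sub_le (hsum _) (fun k => by positivity) hU hn)⟩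
end

section
/- Suppose (a_n) is a sequence of positive reals with α ≤ n(a_{n+1}/a_n − 1) ≤ β for all n ≥ N. Then for every x > 1, x^α ≤ liminf_{t→∞} a_{⌊xt⌋}/a_{⌊t⌋} and limsup_{t→∞} a_{⌊xt⌋}/a_{⌊t⌋} ≤ x^β. -/
/-! For `k ≥ N`, `log (a (k+1) / a k)` lies between `α / (k + α)` and `β / k`, by the elementary
bounds `1 - y⁻¹ ≤ log y ≤ y - 1`. Telescoping, `log (a ⌊xt⌋ / a t)` lies between `α` and `β` times
the shifted harmonic sums `∑_{t ≤ k < ⌊xt⌋} (k + c)⁻¹`, which tend to `log x` since they are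
themselves squeezed between differences of logarithms. -/

open Filter Topology Finset Real

lemma log_add_one_sub_log_le_inv {y : ℝ} (hy : 0 < y) : log (y + 1) - log y ≤ y⁻¹ := by
  have h := log_le_sub_one_of_pos (div_pos (by linarith : 0 < y + 1) hy)
  rw [log_div (by linarith) hy.ne'] at h
  calc log (y + 1) - log y ≤ (y + 1) / y - 1 := h
    _ = y⁻¹ := by field_simp; ring

lemma inv_le_log_sub_log_sub_one {y : ℝ} (hy : 1 < y) : y⁻¹ ≤ log y - log (y - 1) := by
  have h := one_sub_inv_le_log_of_pos (div_pos (by linarith : 0 < y) (by linarith : 0 < y - 1))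
  rw [log_div (by linarith) (by linarith)] at h
  calc y⁻¹ = 1 - (y / (y - 1))⁻¹ := by field_simp; ring
    _ ≤ log y - log (y - 1) := h

lemma div_add_le_log_of_le_mul_sub_one {k α r : ℝ} (hk : 0 < k) (hkα : 0 < k + α)
    (h : α ≤ k * (r - 1)) : α / (k + α) ≤ log r := by
  have hr : (k + α) / k ≤ r := by rw [div_le_iff₀ hk]; linarith
  calc α / (k + α) = 1 - ((k + α) / k)⁻¹ := by field_simp; ring
    _ ≤ log ((k + α) / k) := one_sub_inv_le_log_of_pos (by positivity)
    _ ≤ log r := log_le_log (by positivity) hr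

lemma log_le_div_of_mul_sub_one_le {k β r : ℝ} (hk : 0 < k) (hr : 0 < r)
    (h : k * (r - 1) ≤ β) : log r ≤ β / k :=
  (log_le_sub_one_of_pos hr).trans (by rw [le_div_iff₀ hk]; linarith)

lemma le_liminf_and_limsup_le_of_tendsto_of_tendsto {ι : Type*} {F : Filter ι} [F.NeBot]
    {f l u : ι → ℝ} {A B : ℝ} (hl : Tendsto l F (𝓝 A)) (hu : Tendsto u F (𝓝 B))
    (hlf : ∀ᶠ i in F, l i ≤ f i) (hfu : ∀ᶠ i in F, f i ≤ u i) :
    A ≤ liminf f F ∧ limsup f F ≤ B := by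
  have hbdd_ge : IsBoundedUnder (· ≥ ·) F f := hl.isBoundedUnder_ge.mono_ge hlf
  have hbdd_le : IsBoundedUnder (· ≤ ·) F f := hu.isBoundedUnder_le.mono_le hfu
  constructor
  · rw [← hl.liminf_eq]
    exact liminf_le_liminf hlf hl.isBoundedUnder_ge hbdd_le.isCoboundedUnder_ge
  · rw [← hu.limsup_eq]
    exact limsup_le_limsup hfu hbdd_ge.isCoboundedUnder_le hu.isBoundedUnder_le

section HarmonicSums

variable {m : ℕ → ℕ} {x : ℝ}

lemma tendsto_log_add_sub_log_add (hx : 0 < x)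
    (hm : Tendsto (fun t : ℕ => (m t : ℝ) / t) atTop (𝓝 x)) (c : ℝ) :
    Tendsto (fun t : ℕ => log (m t + c) - log (t + c)) atTop (𝓝 (log x)) := by
  have hc : Tendsto (fun t : ℕ => c / (t : ℝ)) atTop (𝓝 0) :=
    tendsto_const_nhds.div_atTop tendsto_natCast_atTop_atTop
  have hratio : Tendsto (fun t : ℕ => ((m t : ℝ) + c) / (t + c)) atTop (𝓝 x) := by
    have h := (hm.add hc).div ((tendsto_const_nhds (x := (1 : ℝ))).add hc) (by norm_num)
    rw [add_zero, add_zero, div_one] at h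
    refine h.congr' ?_
    filter_upwards [eventually_gt_atTop 0] with t ht
    simp only [Pi.div_apply]
    field_simp
  have hden : ∀ᶠ t : ℕ in atTop, (0 : ℝ) < t + c :=
    (tendsto_atTop_add_const_right _ c tendsto_natCast_atTop_atTop).eventually_gt_atTop 0
  refine ((continuousAt_log hx.ne').tendsto.comp hratio).congr' ?_
  filter_upwards [hden, hratio.eventually (lt_mem_nhds hx)] with t hden hratio_pos
  have hnum : (0 : ℝ) < m t + c := (div_pos_iff_of_pos_right hden).mp hratio_pos
  rw [Function.comp_apply, log_div hnum.ne' hden.ne']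

lemma tendsto_sum_Ico_inv_add (hm : Tendsto (fun t : ℕ => (m t : ℝ) / t) atTop (𝓝 x))
    (hle : ∀ᶠ t in atTop, t ≤ m t) (c : ℝ) :
    Tendsto (fun t : ℕ => ∑ k ∈ Ico t (m t), ((k : ℝ) + c)⁻¹) atTop (𝓝 (log x)) := by
  have hx : 1 ≤ x := by
    refine ge_of_tendsto hm ?_
    filter_upwards [hle, eventually_gt_atTop 0] with t htm ht
    rw [le_div_iff₀ (by exact_mod_cast ht), one_mul]
    exact_mod_cast htm
  refine tendsto_of_tendsto_of_tendsto_of_le_of_le'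
    (tendsto_log_add_sub_log_add (by linarith) hm c)
    (tendsto_log_add_sub_log_add (by linarith) hm (c - 1)) ?_ ?_ <;>
  filter_upwards [hle, tendsto_natCast_atTop_atTop.eventually_gt_atTop (1 - c)] with t htm ht
  · rw [← sum_Ico_sub (fun k : ℕ => log (k + c)) htm]
    refine sum_le_sum fun k hk => ?_
    have htk : (t : ℝ) ≤ k := by exact_mod_cast (mem_Ico.mp hk).1
    push_cast
    rw [add_right_comm]
    exact log_add_one_sub_log_le_inv (by linarith)
  · rw [← sum_Ico_sub (fun k : ℕ => log (k + (c - 1))) htm]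
    refine sum_le_sum fun k hk => ?_
    have htk : (t : ℝ) ≤ k := by exact_mod_cast (mem_Ico.mp hk).1
    have hshift : ((k + 1 : ℕ) : ℝ) + (c - 1) = k + c := by push_cast; ring
    rw [hshift, ← add_sub_assoc]
    exact inv_le_log_sub_log_sub_one (by linarith)

end HarmonicSums

lemma eventually_log_div_bounds {a : ℕ → ℝ} (hpos : ∀ n, 0 < a n) {α β : ℝ}
    {N : ℕ} (h : ∀ n ≥ N, α ≤ (n : ℝ) * (a (n + 1) / a n - 1) ∧
      (n : ℝ) * (a (n + 1) / a n - 1) ≤ β) :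
    ∀ᶠ t : ℕ in atTop, ∀ m ≥ t,
      α * ∑ k ∈ Ico t m, ((k : ℝ) + α)⁻¹ ≤ log (a m / a t) ∧
      log (a m / a t) ≤ β * ∑ k ∈ Ico t m, (k : ℝ)⁻¹ := by
  filter_upwards [eventually_ge_atTop N, eventually_gt_atTop 0,
    tendsto_natCast_atTop_atTop.eventually_gt_atTop (-α)] with t htN ht0 htα m hm
  have hlog : log (a m / a t) = ∑ k ∈ Ico t m, log (a (k + 1) / a k) := by
    simp_rw [log_div (hpos _).ne' (hpos _).ne']
    exact (sum_Ico_sub (fun k => log (a k)) hm).symm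
  have hk : ∀ k ∈ Ico t m, N ≤ k ∧ (0 : ℝ) < k ∧ (0 : ℝ) < k + α := fun k hk => by
    have htk : t ≤ k := (mem_Ico.mp hk).1
    have htk' : (t : ℝ) ≤ k := by exact_mod_cast htk
    exact ⟨htN.trans htk, by exact_mod_cast ht0.trans_le htk, by linarith⟩
  rw [hlog, mul_sum, mul_sum]
  constructor <;> refine sum_le_sum fun k hk_mem => ?_ <;> rw [← div_eq_mul_inv] <;>
    obtain ⟨hkN, hk0, hkα⟩ := hk k hk_mem
  · exact div_add_le_log_of_le_mul_sub_one hk0 hkα (h k hkN).1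
  · exact log_le_div_of_mul_sub_one_le hk0 (div_pos (hpos _) (hpos _)) (h k hkN).2

theorem stmt_15 (a : ℕ → ℝ) (hpos : ∀ n, 0 < a n) (α β : ℝ) (N : ℕ)
    (h : ∀ n ≥ N, α ≤ (n : ℝ) * (a (n + 1) / a n - 1) ∧
      (n : ℝ) * (a (n + 1) / a n - 1) ≤ β) :
    ∀ x : ℝ, 1 < x →
      x ^ α ≤ Filter.liminf (fun t : ℕ => a ⌊x * (t : ℝ)⌋₊ / a t) atTop ∧
      Filter.limsup (fun t : ℕ => a ⌊x * (t : ℝ)⌋₊ / a t) atTop ≤ x ^ β := by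
  intro x hx
  have hm : Tendsto (fun t : ℕ => (⌊x * t⌋₊ : ℝ) / t) atTop (𝓝 x) :=
    (tendsto_nat_floor_mul_div_atTop (by linarith)).comp tendsto_natCast_atTop_atTop
  have hle : ∀ᶠ t : ℕ in atTop, t ≤ ⌊x * t⌋₊ :=
    Eventually.of_forall fun t => Nat.le_floor (by nlinarith [Nat.cast_nonneg (α := ℝ) t])
  have hexp : ∀ γ c : ℝ, Tendsto (fun t : ℕ => exp (γ * ∑ k ∈ Ico t ⌊x * t⌋₊, ((k : ℝ) + c)⁻¹))
      atTop (𝓝 (x ^ γ)) := fun γ c => by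
    rw [rpow_def_of_pos (by linarith), mul_comm]
    exact ((tendsto_sum_Ico_inv_add hm hle c).const_mul γ).rexp
  have hbounds := eventually_log_div_bounds hpos h
  refine le_liminf_and_limsup_le_of_tendsto_of_tendsto (hexp α α) (hexp β 0) ?_ ?_ <;>
  filter_upwards [hbounds, hle] with t hbounds_t htm <;>
  rw [← exp_log (div_pos (hpos _) (hpos _))]
  · exact exp_le_exp.mpr (hbounds_t _ htm).1
  · simpa only [add_zero, exp_le_exp] using (hbounds_t _ htm).2
end

section
/- (Gauss's test) Suppose (a_n) is a sequence of positive reals with a_{n+1}/a_n = 1 + p/n + B_n/n^r for all large n, where r > 1 and (B_n) is bounded. Then a_n ∼ c·n^p for some constant c > 0. In particular ∑ a_n converges if p < −1 and diverges if p ≥ −1. -/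
open Filter Topology Asymptotics

/-! Put `L n = log (a n) - p * log n`. For large `n` the hypothesis gives
`L (n + 1) - L n = log (1 + x n) - p * log (1 + 1 / n)` with `x n = p / n + B n / n ^ r = O(1 / n)`.
Since `log (1 + x) = x + O(x ^ 2)`, the terms `p / n` cancel and the increment is
`O(1 / n ^ 2) + O(1 / n ^ r)`, which is summable. Hence `L n` converges to some `l`, and
`a n / n ^ p = exp (L n) → exp l > 0`; the summability claims then follow by comparison with
`∑ n ^ p`. -/

theorem Real.isBigO_log_one_add_sub_self :
    (fun x : ℝ ↦ log (1 + x) - x) =O[𝓝 0] fun x ↦ x ^ 2 := by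
  have h := Complex.log_sub_self_isBigO.comp_tendsto
    (Complex.continuous_ofReal.tendsto' 0 0 Complex.ofReal_zero)
  rw [← isBigO_norm_left, ← isBigO_norm_right] at h ⊢
  refine h.congr' ?_ (.of_forall fun x ↦ by simp)
  filter_upwards [eventually_gt_nhds (show (-1 : ℝ) < 0 by norm_num)] with x hx
  have h1x : Complex.log (1 + x) = log (1 + x) := by
    rw [Complex.ofReal_log (by linarith), Complex.ofReal_add, Complex.ofReal_one]
  simp only [Function.comp_apply, h1x, ← Complex.ofReal_sub, Complex.norm_real]

theorem exists_tendsto_of_summable_sub_nat {G : Type*} [AddCommGroup G] [TopologicalSpace G]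
    [ContinuousAdd G] {f : ℕ → G} (hf : Summable fun n ↦ f (n + 1) - f n) :
    ∃ l, Tendsto f atTop (𝓝 l) :=
  ⟨f 0 + ∑' n, (f (n + 1) - f n), by
    refine (tendsto_const_nhds.add hf.hasSum.tendsto_sum_nat).congr fun n ↦ ?_
    rw [Finset.sum_range_sub, add_sub_cancel]⟩

theorem summable_log_one_add_sub_self_s16 {x : ℕ → ℝ} (hx : x =O[atTop] fun n ↦ 1 / (n : ℝ)) :
    Summable fun n ↦ Real.log (1 + x n) - x n := by
  have hx0 : Tendsto x atTop (𝓝 0) := hx.trans_tendsto tendsto_one_div_atTop_nhds_zero_nat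
  refine summable_of_isBigO_nat (Real.summable_one_div_nat_pow.mpr one_lt_two) ?_
  simpa only [one_div_pow, Function.comp_def] using
    (Real.isBigO_log_one_add_sub_self.comp_tendsto hx0).trans (hx.pow 2)

theorem isBigO_div_rpow_of_bounded {B : ℕ → ℝ} (hB : ∃ M, ∀ n, |B n| ≤ M) (r : ℝ) :
    (fun n ↦ B n / (n : ℝ) ^ r) =O[atTop] fun n ↦ 1 / (n : ℝ) ^ r := by
  obtain ⟨M, hM⟩ := hB
  have hB1 : B =O[atTop] fun _ ↦ (1 : ℝ) := .of_bound M (.of_forall fun n ↦ by simpa using hM n)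
  simpa only [one_mul, mul_one_div] using hB1.mul (isBigO_refl (fun n : ℕ ↦ 1 / (n : ℝ) ^ r) atTop)

theorem isBigO_one_div_rpow_one_div {r : ℝ} (hr : 1 ≤ r) :
    (fun n : ℕ ↦ 1 / (n : ℝ) ^ r) =O[atTop] fun n ↦ 1 / (n : ℝ) := by
  refine .of_bound 1 ?_
  filter_upwards [eventually_ge_atTop 1] with n hn
  have hn : (1 : ℝ) ≤ n := by exact_mod_cast hn
  rw [one_mul, Real.norm_of_nonneg (by positivity), Real.norm_of_nonneg (by positivity)]
  exact one_div_le_one_div_of_le (by positivity) (Real.self_le_rpow_of_one_le hn hr)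

theorem summable_log_one_add_sub_mul_log_one_add {p r : ℝ} (hr : 1 < r) {B : ℕ → ℝ}
    (hB : ∃ M, ∀ n, |B n| ≤ M) :
    Summable fun n : ℕ ↦
      Real.log (1 + p / n + B n / (n : ℝ) ^ r) - p * Real.log (1 + 1 / n) := by
  have hBr := isBigO_div_rpow_of_bounded hB r
  have hx : (fun n : ℕ ↦ p / n + B n / (n : ℝ) ^ r) =O[atTop] fun n ↦ 1 / (n : ℝ) := by
    refine IsBigO.add ?_ (hBr.trans (isBigO_one_div_rpow_one_div hr.le))
    simpa only [mul_one_div] using (isBigO_refl (fun n : ℕ ↦ 1 / (n : ℝ)) atTop).const_mul_left p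
  have := ((summable_log_one_add_sub_self_s16 hx).sub
    ((summable_log_one_add_sub_self_s16 (isBigO_refl _ _)).mul_left p)).add
    (summable_of_isBigO_nat (Real.summable_one_div_nat_rpow.mpr hr) hBr)
  refine this.congr fun n ↦ ?_
  rw [add_assoc 1]
  ring

theorem exists_tendsto_div_rpow_of_ratio {a : ℕ → ℝ} (hpos : ∀ n, 0 < a n) {p r : ℝ}
    (hr : 1 < r) {B : ℕ → ℝ} (hB : ∃ M, ∀ n, |B n| ≤ M)
    (h : ∀ᶠ n : ℕ in atTop, a (n + 1) / a n = 1 + p / n + B n / (n : ℝ) ^ r) :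
    ∃ c, 0 < c ∧ Tendsto (fun n : ℕ ↦ a n / (n : ℝ) ^ p) atTop (𝓝 c) := by
  set L : ℕ → ℝ := fun n ↦ Real.log (a n) - p * Real.log n
  have hL : Summable fun n ↦ L (n + 1) - L n := by
    refine (summable_log_one_add_sub_mul_log_one_add (p := p) hr hB).congr_cofinite ?_
    rw [Nat.cofinite_eq_atTop]
    filter_upwards [h, eventually_ge_atTop 1] with n hn hn1
    have hn0 : (0 : ℝ) < n := by exact_mod_cast hn1
    rw [← hn, Real.log_div (hpos _).ne' (hpos _).ne', one_add_div hn0.ne',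
      Real.log_div (by positivity) hn0.ne']
    simp only [L]
    push_cast
    ring
  obtain ⟨l, hl⟩ := exists_tendsto_of_summable_sub_nat hL
  refine ⟨Real.exp l, Real.exp_pos l, ((Real.continuous_exp.tendsto l).comp hl).congr' ?_⟩
  filter_upwards [eventually_ge_atTop 1] with n hn
  have hn0 : (0 : ℝ) < n := by exact_mod_cast hn
  simp only [Function.comp_apply, L, Real.exp_sub, Real.exp_log (hpos n),
    Real.rpow_def_of_pos hn0, mul_comm p]

theorem stmt_16 (a : ℕ → ℝ) (hpos : ∀ n, 0 < a n) (p r : ℝ) (hr : 1 < r)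
    (B : ℕ → ℝ) (hB : ∃ M : ℝ, ∀ n, |B n| ≤ M)
    (h : ∀ᶠ n : ℕ in atTop, a (n + 1) / a n = 1 + p / n + B n / (n : ℝ) ^ r) :
    (∃ c : ℝ, 0 < c ∧ Tendsto (fun n : ℕ => a n / (n : ℝ) ^ p) atTop (𝓝 c)) ∧
      (p < -1 → Summable a) ∧ (-1 ≤ p → ¬ Summable a) := by
  obtain ⟨c, hc, hlim⟩ := exists_tendsto_div_rpow_of_ratio hpos hr hB h
  have hsummable : Summable a ↔ p < -1 := by
    rw [← (isTheta_of_div_tendsto_nhds_ne_zero hlim hc.ne').summable_iff_nat,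
      Real.summable_nat_rpow]
  exact ⟨⟨c, hc, hlim⟩, hsummable.mpr, fun hp ha ↦ (hsummable.mp ha).not_ge hp⟩
end

section
/- (Bertrand's test) Suppose α(n) := n(|a_{n+1}/a_n| − 1) → −1 and (log n)(α(n) + 1) → β. If β > −1, then ∑ |a_n| = ∞; if β < −1, then ∑ |a_n| < ∞. -/
/-!
Kummer's test with `c n = n log n`. Writing `r n = |a (n + 1) / a n|`, the hypothesis on `β` makes
the Kummer quantity `c n / r n - c (n + 1)` tend to `-1 - β`. If this limit is positive, `c n |a n|`
decreases by at least a fixed multiple of `|a (n + 1)|`, so the partial sums of `|a n|` are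
bounded. If it is negative, `c n |a n|` is eventually increasing, hence `|a n| ≥ C / (n log n)`,
and `∑ 1 / (n log n)` diverges by Cauchy condensation.
-/

open Filter Topology

theorem summable_of_le_sub_succ_eventually {b p : ℕ → ℝ} (hb : ∀ n, 0 ≤ b n)
    (hp : ∀ n, 0 ≤ p n) (h : ∀ᶠ n in atTop, b n ≤ p n - p (n + 1)) : Summable b := by
  obtain ⟨N, hN⟩ := eventually_atTop.1 h
  refine (summable_nat_add_iff N).1 <| summable_of_sum_range_le (c := p N) (fun _ => hb _)
    fun m => ?_
  calc ∑ k ∈ Finset.range m, b (k + N)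
      ≤ ∑ k ∈ Finset.range m, (p (k + N) - p (k + 1 + N)) :=
        Finset.sum_le_sum fun k _ => by
          rw [add_right_comm]; exact hN _ (Nat.le_add_left N k)
    _ = p N - p (m + N) := by simpa using Finset.sum_range_sub' (fun k => p (k + N)) m
    _ ≤ p N := sub_le_self _ (hp _)

theorem summable_of_tendsto_kummer {b c : ℕ → ℝ} {L : ℝ} (hb : ∀ n, 0 < b n)
    (hc : ∀ n, 0 ≤ c n) (h : Tendsto (fun n => c n * b n / b (n + 1) - c (n + 1)) atTop (𝓝 L))
    (hL : 0 < L) : Summable b := by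
  have hL2 : 0 < L / 2 := half_pos hL
  have hstep : ∀ᶠ n in atTop,
      b (n + 1) ≤ c n * b n / (L / 2) - c (n + 1) * b (n + 1) / (L / 2) := by
    filter_upwards [h.eventually_const_lt (half_lt_self hL)] with n hn
    rw [lt_sub_iff_add_lt, lt_div_iff₀ (hb _)] at hn
    rw [← sub_div, le_div_iff₀ hL2]
    linarith
  refine (summable_nat_add_iff 1).1 <| summable_of_le_sub_succ_eventually
    (fun n => (hb _).le) (fun n => div_nonneg (mul_nonneg (hc n) (hb n).le) hL2.le) hstep

theorem not_summable_of_tendsto_kummer {b c : ℕ → ℝ} {L : ℝ} (hb : ∀ n, 0 < b n)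
    (hc : ∀ᶠ n in atTop, 0 < c n) (hdiv : ¬ Summable fun n => (c n)⁻¹)
    (h : Tendsto (fun n => c n * b n / b (n + 1) - c (n + 1)) atTop (𝓝 L)) (hL : L < 0) :
    ¬ Summable b := by
  intro hsum
  obtain ⟨N, hN⟩ := eventually_atTop.1 ((h.eventually_lt_const hL).and hc)
  have hmono : ∀ n, N ≤ n → c N * b N ≤ c n * b n := by
    intro n hn
    induction n, hn using Nat.le_induction with
    | base => exact le_rfl
    | succ n hn ih =>
      have hneg := (hN n hn).1
      rw [sub_neg, div_lt_iff₀ (hb _)] at hneg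
      exact ih.trans hneg.le
  have hpos : 0 < c N * b N := mul_pos (hN N le_rfl).2 (hb N)
  refine hdiv <| (hsum.mul_left (c N * b N)⁻¹).of_norm_bounded_eventually_nat ?_
  filter_upwards [eventually_ge_atTop N] with n hn
  have hcn := (hN n hn).2
  rw [Real.norm_of_nonneg (inv_nonneg.2 hcn.le), inv_mul_eq_div, le_div_iff₀ hpos,
    inv_mul_le_iff₀ hcn]
  exact hmono n hn

theorem Real.not_summable_natCast_mul_log_inv :
    ¬ Summable (fun n : ℕ => ((n : ℝ) * Real.log n)⁻¹) := by
  have hnonneg : 0 ≤ᶠ[atTop] fun n : ℕ => ((n : ℝ) * Real.log n)⁻¹ :=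
    .of_forall fun n => inv_nonneg.2 (mul_nonneg n.cast_nonneg (Real.log_natCast_nonneg n))
  have hanti : ∀ᶠ n : ℕ in atTop,
      ((n + 1 : ℕ) * Real.log (n + 1 : ℕ) : ℝ)⁻¹ ≤ ((n : ℝ) * Real.log n)⁻¹ := by
    filter_upwards [eventually_ge_atTop 2] with n hn
    have hlog : 0 < Real.log n := Real.log_pos (by exact_mod_cast hn)
    gcongr <;> exact n.le_succ
  rw [← summable_condensed_iff_of_eventually_nonneg hnonneg hanti]
  have hcond : (fun k : ℕ => (2 : ℝ) ^ k * (((2 ^ k : ℕ) : ℝ) * Real.log (2 ^ k : ℕ))⁻¹) =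
      fun k : ℕ => (Real.log 2)⁻¹ * (1 / (k : ℝ)) := by
    ext k
    rw [Nat.cast_pow, Nat.cast_ofNat, Real.log_pow, ← div_eq_mul_inv,
      div_mul_cancel_left₀ (by positivity)]
    ring
  rw [hcond, summable_mul_left_iff (inv_ne_zero (Real.log_pos one_lt_two).ne')]
  exact Real.not_summable_one_div_natCast

theorem tendsto_neg_one_of_tendsto_log_mul_add_one {α : ℕ → ℝ} {β : ℝ}
    (hβ : Tendsto (fun n : ℕ => Real.log n * (α n + 1)) atTop (𝓝 β)) :
    Tendsto α atTop (𝓝 (-1)) := by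
  have hlog : Tendsto (fun n : ℕ => (Real.log n)⁻¹) atTop (𝓝 0) :=
    (Real.tendsto_log_atTop.comp tendsto_natCast_atTop_atTop).inv_tendsto_atTop
  have hlim := (hβ.mul hlog).sub_const 1
  rw [mul_zero, zero_sub] at hlim
  refine hlim.congr' ?_
  filter_upwards [eventually_gt_atTop 1] with n hn
  have : Real.log n ≠ 0 := (Real.log_pos (by exact_mod_cast hn)).ne'
  field_simp
  ring

theorem tendsto_log_natCast_add_one_div_natCast :
    Tendsto (fun n : ℕ => Real.log ((n : ℝ) + 1) / n) atTop (𝓝 0) := by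
  simpa [Function.comp_def] using (Real.tendsto_pow_log_div_mul_add_atTop 1 (-1) 1
    one_ne_zero).comp (tendsto_atTop_add_const_right _ 1 tendsto_natCast_atTop_atTop)

theorem tendsto_natCast_mul_log_add_one_sub_log :
    Tendsto (fun n : ℕ => (n : ℝ) * (Real.log ((n : ℝ) + 1) - Real.log n)) atTop (𝓝 1) := by
  refine ((Real.tendsto_mul_log_one_add_div_atTop 1).comp tendsto_natCast_atTop_atTop).congr' ?_
  filter_upwards [eventually_ne_atTop 0] with n hn
  have hn : (n : ℝ) ≠ 0 := Nat.cast_ne_zero.2 hn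
  rw [Function.comp_apply, ← Real.log_div (by positivity) hn, add_div, div_self hn, add_comm]

theorem tendsto_natCast_mul_log_div_sub_of_tendsto_log_mul {r : ℕ → ℝ} {β : ℝ}
    (hβ : Tendsto (fun n : ℕ => Real.log n * ((n : ℝ) * (r n - 1) + 1)) atTop (𝓝 β)) :
    Tendsto (fun n : ℕ => (n : ℝ) * Real.log n / r n - ((n : ℝ) + 1) * Real.log ((n : ℝ) + 1))
      atTop (𝓝 (-1 - β)) := by
  have hα := tendsto_neg_one_of_tendsto_log_mul_add_one hβ
  have hr : Tendsto r atTop (𝓝 1) := by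
    have hlim := (hα.mul (tendsto_inv_atTop_zero.comp tendsto_natCast_atTop_atTop)).const_add 1
    rw [mul_zero, add_zero] at hlim
    refine hlim.congr' ?_
    filter_upwards [eventually_ne_atTop 0] with n hn
    have : (n : ℝ) ≠ 0 := Nat.cast_ne_zero.2 hn
    simp only [Function.comp_apply]
    field_simp
    ring
  -- With `α = n (r - 1)` and `d = log (n + 1) - log n`, `r` times the Kummer quantity is
  -- `-n d - log n (α + 1) - (α + 1) d - α log (n + 1) / n`.
  have hnum := (((tendsto_natCast_mul_log_add_one_sub_log.neg.sub hβ).sub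
    ((hα.add_const 1).mul Real.tendsto_log_nat_add_one_sub_log)).sub
    (hα.mul tendsto_log_natCast_add_one_div_natCast)).div hr one_ne_zero
  rw [show (-1 - β - (-1 + 1) * 0 - -1 * 0) / 1 = -1 - β by ring] at hnum
  refine hnum.congr' ?_
  filter_upwards [eventually_ne_atTop 0, hr.eventually_ne one_ne_zero] with n hn hrn
  have : (n : ℝ) ≠ 0 := Nat.cast_ne_zero.2 hn
  simp only [Pi.div_apply]
  field_simp
  ring

theorem stmt_18_general (a : ℕ → ℝ) (hne : ∀ n, a n ≠ 0) (β : ℝ)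
    (hβ : Tendsto
      (fun n : ℕ => Real.log n * ((n : ℝ) * (|a (n + 1) / a n| - 1) + 1))
      atTop (𝓝 β)) :
    (-1 < β → ¬ Summable (fun n => |a n|)) ∧
    (β < -1 → Summable (fun n => |a n|)) := by
  have hb : ∀ n, 0 < |a n| := fun n => abs_pos.2 (hne n)
  have hc : ∀ n : ℕ, 0 ≤ (n : ℝ) * Real.log n :=
    fun n => mul_nonneg n.cast_nonneg (Real.log_natCast_nonneg n)
  have hc_pos : ∀ᶠ n : ℕ in atTop, 0 < (n : ℝ) * Real.log n := by
    filter_upwards [eventually_gt_atTop 1] with n hn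
    have hn : (1 : ℝ) < n := by exact_mod_cast hn
    exact mul_pos (by linarith) (Real.log_pos hn)
  have hkummer : Tendsto (fun n : ℕ => (n : ℝ) * Real.log n * |a n| / |a (n + 1)| -
      ((n + 1 : ℕ) : ℝ) * Real.log (n + 1 : ℕ)) atTop (𝓝 (-1 - β)) := by
    convert tendsto_natCast_mul_log_div_sub_of_tendsto_log_mul hβ using 2 with n
    rw [abs_div, div_div_eq_mul_div, Nat.cast_succ]
  exact ⟨fun hβ' => not_summable_of_tendsto_kummer hb hc_pos
      Real.not_summable_natCast_mul_log_inv hkummer (by linarith),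
    fun hβ' => summable_of_tendsto_kummer hb hc hkummer (by linarith)⟩

theorem stmt_18 (a : ℕ → ℝ) (hne : ∀ n, a n ≠ 0) (β : ℝ)
    (h : Tendsto (fun n : ℕ => (n : ℝ) * (|a (n + 1) / a n| - 1)) atTop (𝓝 (-1)))
    (hβ : Tendsto
      (fun n : ℕ => Real.log n * ((n : ℝ) * (|a (n + 1) / a n| - 1) + 1))
      atTop (𝓝 β)) :
    (-1 < β → ¬ Summable (fun n => |a n|)) ∧
    (β < -1 → Summable (fun n => |a n|)) :=
  stmt_18_general a hne β hβ
end

section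
/- Suppose (a_n) are positive reals and there exist a regularly-varying-like envelope: A·φ_n ≤ a_n ≤ B·ψ_n for all n ≥ N, where n(φ_{n+1}/φ_n − 1) → α > −1 and n(ψ_{n+1}/ψ_n − 1) → β > −1 and A, B > 0. Then the partial sums satisfy A'·n·φ_n ≤ ∑_{k=1}^n a_k ≤ B'·n·ψ_n for all large n, for some constants A', B' > 0; i.e., liminf (∑_{k≤n} a_k)/(n φ_n) > 0 and limsup (∑_{k≤n} a_k)/(n ψ_n) < ∞. -/
open Filter Topology Asymptotics Finset

/-!
The hypothesis `n (ψ (n+1) / ψ n - 1) → β` says exactly that the increments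
`(n+1) ψ (n+1) - n ψ n` of `n ψ n` are asymptotic to `(1 + β) ψ (n+1)`. Summing these increments
telescopes to `n ψ n`, so comparing partial sums termwise gives `∑_{k ≤ n} ψ k = O(n ψ n)` when
`1 + β > 0`, and `n φ n = O(∑_{k ≤ n} φ k)` for any `α`. The envelope `A φ ≤ a ≤ B ψ` transfers
both bounds to the partial sums of `a`.
-/

theorem Finset.sum_Icc_one_eq_sum_range {M : Type*} [AddCommMonoid M] (f : ℕ → M) (n : ℕ) :
    ∑ k ∈ Icc 1 n, f k = ∑ k ∈ range n, f (k + 1) := by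
  rw [range_eq_Ico, sum_Ico_add' f 0 n 1]
  rfl

lemma exists_pos_le_sum_range {g : ℕ → ℝ} (hg : ∀ᶠ k in atTop, 0 ≤ g k)
    (hpos : ∀ᶠ n in atTop, 0 < ∑ k ∈ range n, g k) :
    ∃ b, 0 < b ∧ ∀ᶠ n in atTop, b ≤ ∑ k ∈ range n, g k := by
  obtain ⟨N, hN⟩ := eventually_atTop.mp (hg.and hpos)
  refine ⟨∑ k ∈ range N, g k, (hN N le_rfl).2, ?_⟩
  filter_upwards [eventually_ge_atTop N] with n hn
  rw [← sum_range_add_sum_Ico g hn, le_add_iff_nonneg_right]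
  exact sum_nonneg fun k hk => (hN k (mem_Ico.mp hk).1).1

theorem Asymptotics.IsBigO.sum_range {E : Type*} [NormedAddCommGroup E] {f : ℕ → E}
    {g : ℕ → ℝ} (h : f =O[atTop] g) (hg : ∀ᶠ k in atTop, 0 ≤ g k)
    (hpos : ∀ᶠ n in atTop, 0 < ∑ k ∈ range n, g k) :
    (fun n => ∑ k ∈ range n, f k) =O[atTop] fun n => ∑ k ∈ range n, g k := by
  obtain ⟨C, hC⟩ := h.bound
  obtain ⟨M, hM⟩ := eventually_atTop.mp (hC.and hg)
  set K := ‖∑ k ∈ range M, f k‖ - C * ∑ k ∈ range M, g k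
  have hK : (fun _ : ℕ => K) =O[atTop] fun n => ∑ k ∈ range n, g k := by
    obtain ⟨b, hb, hbg⟩ := exists_pos_le_sum_range hg hpos
    refine (isBigO_const_const K (one_ne_zero' ℝ) atTop).trans ?_
    refine (isBigO_const_left_iff_pos_le_norm one_ne_zero).mpr ⟨b, hb, ?_⟩
    filter_upwards [hbg] with n hn using hn.trans (le_abs_self _)
  have hbound : ∀ᶠ n in atTop, ‖∑ k ∈ range n, f k‖ ≤ K + C * ∑ k ∈ range n, g k := by
    filter_upwards [eventually_ge_atTop M] with n hn
    rw [← sum_range_add_sum_Ico f hn, ← sum_range_add_sum_Ico g hn]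
    have hIco : ‖∑ k ∈ Ico M n, f k‖ ≤ ∑ k ∈ Ico M n, C * g k :=
      norm_sum_le_of_le _ fun k hk => by
        simpa [abs_of_nonneg (hM k (mem_Ico.mp hk).1).2] using (hM k (mem_Ico.mp hk).1).1
    rw [← mul_sum] at hIco
    linarith [norm_add_le (∑ k ∈ range M, f k) (∑ k ∈ Ico M n, f k)]
  exact (IsBigO.of_bound' (hbound.mono fun n hn => hn.trans (le_abs_self _))).trans
    (hK.add ((isBigO_refl _ _).const_mul_left C))

lemma exists_pos_eventually_le_of_isBigO {α : Type*} {l : Filter α} {f : α → ℝ}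
    {g : α → ℝ} (h : f =O[l] g) (hg : ∀ x, 0 ≤ g x) : ∃ c > 0, ∀ᶠ x in l, f x ≤ c * g x := by
  obtain ⟨c, hc, hfg⟩ := h.exists_pos
  refine ⟨c, hc, hfg.bound.mono fun x hx => ?_⟩
  rw [Real.norm_of_nonneg (hg x)] at hx
  exact (le_abs_self _).trans hx

lemma sum_range_increment (ψ : ℕ → ℝ) (n : ℕ) :
    ∑ k ∈ range n, (((k + 1 : ℕ) : ℝ) * ψ (k + 1) - k * ψ k) = n * ψ n := by
  simpa using sum_range_sub (fun m : ℕ => (m : ℝ) * ψ m) n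

section Raabe

variable {ψ : ℕ → ℝ} {β : ℝ}

lemma tendsto_increment_div (hψpos : ∀ n, 0 < ψ n)
    (hψ : Tendsto (fun n : ℕ => (n : ℝ) * (ψ (n + 1) / ψ n - 1)) atTop (𝓝 β)) :
    Tendsto (fun n : ℕ => (((n + 1 : ℕ) : ℝ) * ψ (n + 1) - n * ψ n) / ψ (n + 1))
      atTop (𝓝 (1 + β)) := by
  have hratio : Tendsto (fun n : ℕ => ψ (n + 1) / ψ n - 1) atTop (𝓝 0) := by
    refine (hψ.div_atTop tendsto_natCast_atTop_atTop).congr' ?_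
    filter_upwards [eventually_ge_atTop 1] with n hn
    have : (n : ℝ) ≠ 0 := by positivity
    field_simp
  have hlim := tendsto_const_nhds (x := (1 : ℝ)) |>.add (hψ.div (tendsto_const_nhds.add hratio)
    (by norm_num : (1 : ℝ) + 0 ≠ 0))
  rw [add_zero, div_one] at hlim
  refine hlim.congr fun n => ?_
  have := (hψpos n).ne'
  have := (hψpos (n + 1)).ne'
  simp only [Pi.div_apply, add_sub_cancel]
  push_cast
  field_simp
  ring

lemma natCast_mul_isBigO_sum_range {b : ℕ → ℝ} (hψpos : ∀ n, 0 < ψ n)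
    (hψ : Tendsto (fun n : ℕ => (n : ℝ) * (ψ (n + 1) / ψ n - 1)) atTop (𝓝 β))
    (hbpos : ∀ k, 0 < b k) (h : (fun k => ψ (k + 1)) =O[atTop] b) :
    (fun n : ℕ => (n : ℝ) * ψ n) =O[atTop] fun n => ∑ k ∈ range n, b k := by
  have hinc : (fun k : ℕ => ((k + 1 : ℕ) : ℝ) * ψ (k + 1) - k * ψ k) =O[atTop]
      fun k => ψ (k + 1) :=
    isBigO_of_div_tendsto_nhds (.of_forall fun k hk => absurd hk (hψpos _).ne') _
      (tendsto_increment_div hψpos hψ)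
  have hsum_pos : ∀ᶠ n in atTop, 0 < ∑ k ∈ range n, b k := by
    filter_upwards [eventually_ge_atTop 1] with n hn
    exact sum_pos (fun k _ => hbpos k) (nonempty_range_iff.mpr (by omega))
  simpa only [sum_range_increment] using
    (hinc.trans h).sum_range (.of_forall fun k => (hbpos k).le) hsum_pos

lemma sum_range_isBigO_natCast_mul {b : ℕ → ℝ} (hψpos : ∀ n, 0 < ψ n) (hβ : -1 < β)
    (hψ : Tendsto (fun n : ℕ => (n : ℝ) * (ψ (n + 1) / ψ n - 1)) atTop (𝓝 β))
    (h : b =O[atTop] fun k => ψ (k + 1)) :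
    (fun n => ∑ k ∈ range n, b k) =O[atTop] fun n : ℕ => (n : ℝ) * ψ n := by
  have hlim := tendsto_increment_div hψpos hψ
  have hinc : (fun k => ψ (k + 1)) =O[atTop]
      fun k : ℕ => ((k + 1 : ℕ) : ℝ) * ψ (k + 1) - k * ψ k :=
    isBigO_of_div_tendsto_nhds_of_ne_zero hlim (by linarith)
  have hinc_nonneg : ∀ᶠ k in atTop, 0 ≤ ((k + 1 : ℕ) : ℝ) * ψ (k + 1) - k * ψ k := by
    filter_upwards [hlim.eventually (lt_mem_nhds (by linarith : (0 : ℝ) < 1 + β))] with k hk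
    exact ((div_pos_iff_of_pos_right (hψpos _)).mp hk).le
  have hsum_pos : ∀ᶠ n in atTop,
      0 < ∑ k ∈ range n, (((k + 1 : ℕ) : ℝ) * ψ (k + 1) - k * ψ k) := by
    filter_upwards [eventually_ge_atTop 1] with n hn
    rw [sum_range_increment]
    exact mul_pos (by exact_mod_cast hn) (hψpos n)
  simpa only [sum_range_increment] using (h.trans hinc).sum_range hinc_nonneg hsum_pos

end Raabe

theorem stmt_19_general (a φ ψ : ℕ → ℝ) (hapos : ∀ n, 0 < a n)
    (hφpos : ∀ n, 0 < φ n) (hψpos : ∀ n, 0 < ψ n) (α β : ℝ)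
    (hβ : -1 < β)
    (hφ : Tendsto (fun n : ℕ => (n : ℝ) * (φ (n + 1) / φ n - 1)) atTop (𝓝 α))
    (hψ : Tendsto (fun n : ℕ => (n : ℝ) * (ψ (n + 1) / ψ n - 1)) atTop (𝓝 β))
    (henv : ∃ (A B : ℝ) (N : ℕ), 0 < A ∧ 0 < B ∧
      ∀ n ≥ N, A * φ n ≤ a n ∧ a n ≤ B * ψ n) :
    ∃ (A' B' : ℝ), 0 < A' ∧ 0 < B' ∧
      ∀ᶠ n : ℕ in atTop,
        A' * (n : ℝ) * φ n ≤ ∑ k ∈ Finset.Icc 1 n, a k ∧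
        ∑ k ∈ Finset.Icc 1 n, a k ≤ B' * (n : ℝ) * ψ n := by
  obtain ⟨A, B, N, hA, hB, hAB⟩ := henv
  have hφa : φ =O[atTop] a := IsBigO.of_bound A⁻¹ <| by
    filter_upwards [eventually_ge_atTop N] with n hn
    rw [Real.norm_of_nonneg (hφpos n).le, Real.norm_of_nonneg (hapos n).le,
      le_inv_mul_iff₀ hA]
    exact (hAB n hn).1
  have haψ : a =O[atTop] ψ := IsBigO.of_bound B <| by
    filter_upwards [eventually_ge_atTop N] with n hn
    rw [Real.norm_of_nonneg (hψpos n).le, Real.norm_of_nonneg (hapos n).le]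
    exact (hAB n hn).2
  have hshift := tendsto_add_atTop_nat 1
  obtain ⟨c₁, hc₁, hlower⟩ := exists_pos_eventually_le_of_isBigO
    (natCast_mul_isBigO_sum_range hφpos hφ (fun k => hapos (k + 1)) (hφa.comp_tendsto hshift))
    fun n => sum_nonneg fun k _ => (hapos _).le
  obtain ⟨c₂, hc₂, hupper⟩ := exists_pos_eventually_le_of_isBigO
    (sum_range_isBigO_natCast_mul (b := fun k => a (k + 1)) hψpos hβ hψ
      (haψ.comp_tendsto hshift))
    fun n => mul_nonneg n.cast_nonneg (hψpos n).le
  refine ⟨c₁⁻¹, c₂, inv_pos.mpr hc₁, hc₂, ?_⟩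
  filter_upwards [hlower, hupper] with n hn₁ hn₂
  rw [sum_Icc_one_eq_sum_range, mul_assoc, inv_mul_le_iff₀ hc₁, mul_assoc]
  exact ⟨hn₁, hn₂⟩

theorem stmt_19 (a φ ψ : ℕ → ℝ) (hapos : ∀ n, 0 < a n)
    (hφpos : ∀ n, 0 < φ n) (hψpos : ∀ n, 0 < ψ n) (α β : ℝ)
    (hα : -1 < α) (hβ : -1 < β)
    (hφ : Tendsto (fun n : ℕ => (n : ℝ) * (φ (n + 1) / φ n - 1)) atTop (𝓝 α))
    (hψ : Tendsto (fun n : ℕ => (n : ℝ) * (ψ (n + 1) / ψ n - 1)) atTop (𝓝 β))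
    (henv : ∃ (A B : ℝ) (N : ℕ), 0 < A ∧ 0 < B ∧
      ∀ n ≥ N, A * φ n ≤ a n ∧ a n ≤ B * ψ n) :
    ∃ (A' B' : ℝ), 0 < A' ∧ 0 < B' ∧
      ∀ᶠ n : ℕ in atTop,
        A' * (n : ℝ) * φ n ≤ ∑ k ∈ Finset.Icc 1 n, a k ∧
        ∑ k ∈ Finset.Icc 1 n, a k ≤ B' * (n : ℝ) * ψ n :=
  stmt_19_general a φ ψ hapos hφpos hψpos α β hβ hφ hψ henv
end
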